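/- arXiv:2509.14176 — 7 statements merged into one kernel-verified Lean document; each statement's English description precedes it below -/
import Mathlib

section
/- Let z_1,...,z_d be nonzero elements of a field and let 1 ≤ m ≤ d. For any integer n with 0 ≤ n ≤ m: e_n(1/z_1,...,1/z_d) · ∏_{i=1}^m z_i = ∑_{i=0}^{n} e_{m-n+i}(z_1,...,z_m) · e_i(1/z_{m+1},...,1/z_d). -/
/-! `e_k(t)` is the coefficient of `X ^ k` in `∏ (1 + t_i X)`. Splitting this product at `m` turns
`e_n` into a convolution of the `e`'s of the two blocks, and on the first block
`∏ (1 + t_i⁻¹ X) · ∏ t_i = ∏ (X + t_i)`, whose coefficients are, by Vieta, the `e_k(t)` in reverse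
order. -/

/-- Elementary symmetric polynomial `e_k(t 0, ..., t (r-1))`. -/
def esymP {R : Type*} [CommRing R] {r : ℕ} (t : Fin r → R) (k : ℕ) : R :=
  ∑ s ∈ Finset.univ.powersetCard k, ∏ i ∈ s, t i

open Finset Polynomial

theorem Finset.coeff_prod_one_add_C_mul_X {R ι : Type*} [CommSemiring R] (u : Finset ι)
    (f : ι → R) (n : ℕ) :
    (∏ i ∈ u, (1 + C (f i) * X)).coeff n = ∑ t ∈ u.powersetCard n, ∏ i ∈ t, f i := by
  classical
  rw [prod_one_add, finsetSum_coeff, powersetCard_eq_filter, sum_filter]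
  refine sum_congr rfl fun t _ => ?_
  rw [prod_mul_distrib, prod_const, ← map_prod, coeff_C_mul_X_pow]
  exact if_congr eq_comm rfl rfl

theorem Finset.sum_powersetCard_prod_inv_mul_prod {F ι : Type*} [Semifield F] {u : Finset ι}
    {f : ι → F} (hf : ∀ i ∈ u, f i ≠ 0) {j : ℕ} (hj : j ≤ #u) :
    (∑ t ∈ u.powersetCard j, ∏ i ∈ t, (f i)⁻¹) * ∏ i ∈ u, f i
      = ∑ t ∈ u.powersetCard (#u - j), ∏ i ∈ t, f i := by
  have hprod : (∏ i ∈ u, (1 + C (f i)⁻¹ * X)) * C (∏ i ∈ u, f i) = ∏ i ∈ u, (X + C (f i)) := by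
    rw [map_prod, ← prod_mul_distrib]
    refine prod_congr rfl fun i hi => ?_
    rw [add_mul, one_mul, mul_right_comm, ← C_mul, inv_mul_cancel₀ (hf i hi), C_1, one_mul,
      add_comm]
  rw [← coeff_prod_one_add_C_mul_X, ← coeff_mul_C, hprod, prod_X_add_C_coeff _ _ hj]

theorem Fin.prod_univ_eq_prod_castLE_mul_prod {M : Type*} [CommMonoid M] {m d : ℕ} (hmd : m ≤ d)
    (g : Fin d → M) :
    ∏ i, g i = (∏ i : Fin m, g (Fin.castLE hmd i)) * ∏ j : Fin (d - m), g ⟨m + j, by omega⟩ := by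
  rw [← Fin.prod_congr' g (Nat.add_sub_cancel' hmd), Fin.prod_univ_add]
  rfl

theorem esymP_eq_coeff_prod {R : Type*} [CommRing R] {r : ℕ} (t : Fin r → R) (k : ℕ) :
    esymP t k = (∏ i, (1 + C (t i) * X)).coeff k :=
  (coeff_prod_one_add_C_mul_X _ _ _).symm

theorem esymP_eq_sum_antidiagonal {R : Type*} [CommRing R] {m d : ℕ} (hmd : m ≤ d)
    (t : Fin d → R) (n : ℕ) :
    esymP t n = ∑ p ∈ antidiagonal n, esymP (fun i : Fin m => t (Fin.castLE hmd i)) p.1 *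
      esymP (fun j : Fin (d - m) => t ⟨m + j, by omega⟩) p.2 := by
  simp only [esymP_eq_coeff_prod]
  rw [Fin.prod_univ_eq_prod_castLE_mul_prod hmd, coeff_mul]

theorem esymP_inv_mul_prod {F : Type*} [Field F] {r : ℕ} {t : Fin r → F} (ht : ∀ i, t i ≠ 0)
    {j : ℕ} (hj : j ≤ r) : esymP (fun i => (t i)⁻¹) j * ∏ i, t i = esymP t (r - j) := by
  have h := sum_powersetCard_prod_inv_mul_prod (u := univ) (fun i _ => ht i) (j := j)
    (by rwa [card_univ, Fintype.card_fin])
  rwa [card_univ, Fintype.card_fin] at h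

theorem esymm_inv_prod_small {F : Type*} [Field F] (d m n : ℕ) (hmd : m ≤ d)
    (hn : n ≤ m) (z : Fin d → F) (hz : ∀ i, z i ≠ 0) :
    esymP (fun i => (z i)⁻¹) n * ∏ i : Fin m, z (Fin.castLE hmd i)
      = ∑ i ∈ Finset.range (n + 1),
          esymP (fun j : Fin m => z (Fin.castLE hmd j)) (m - n + i) *
            esymP (fun j : Fin (d - m) => (z ⟨m + j.1, by omega⟩)⁻¹) i := by
  rw [esymP_eq_sum_antidiagonal hmd, sum_mul, ← Nat.sum_antidiagonal_swap,
    Nat.sum_antidiagonal_eq_sum_range_succ_mk]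
  refine sum_congr rfl fun i hmem => ?_
  simp only [Prod.swap_prod_mk]
  have hi : i ≤ n := Nat.lt_succ_iff.mp (mem_range.mp hmem)
  rw [mul_right_comm, esymP_inv_mul_prod (fun _ => hz _) (by omega)]
  congr 2
  omega
end

section
/- Let d ≥ 2 and define the (d-2)×(d-1) integer matrix W by W_{i,j} = d - 2 - 2i + j. Let σ: [d-1] → [d-2] be a surjection, and let u, v be the two distinct elements of [d-1] with σ(u) = σ(v). Then ∑_{i ∈ [d-1], i ≠ u} W_{σ(i), i} = C(d-1, 2) + 1 - u, where C(d-1,2) is the binomial coefficient. -/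
/-!
Removing `u` leaves a bijection from `[d-1] \ {u}` onto `[d-2]`, so the `σ`-part of the sum is
`∑_{b < d-2} (d - 3 - 2b)`, which vanishes by the reflection `b ↦ d - 3 - b`. What remains is
`∑_{i ≠ u} i = C(d-1, 2) - u`.
-/

open Finset

theorem Function.Surjective.sum_comp_erase_of_eq {α β M : Type*} [Fintype α] [Fintype β]
    [DecidableEq α] [AddCommMonoid M] {σ : α → β} (hσ : Function.Surjective σ) {u v : α}
    (huv : u ≠ v) (hfib : σ u = σ v) (hcard : Fintype.card α = Fintype.card β + 1)
    (g : β → M) : ∑ i ∈ univ.erase u, g (σ i) = ∑ b, g b := by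
  classical
  have himage : (univ.erase u).image σ = univ := by
    refine eq_univ_of_forall fun b => ?_
    obtain ⟨a, rfl⟩ := hσ b
    by_cases ha : a = u
    · exact mem_image.2 ⟨v, mem_erase.2 ⟨huv.symm, mem_univ v⟩, by rw [← hfib, ha]⟩
    · exact mem_image_of_mem σ (mem_erase.2 ⟨ha, mem_univ a⟩)
  have hinj : Set.InjOn σ (univ.erase u) := by
    refine injOn_of_card_image_eq ?_
    rw [himage, card_univ, card_erase_of_mem (mem_univ u), card_univ, hcard, Nat.add_sub_cancel]
  rw [← sum_image hinj, himage]

theorem Fin.sum_val_eq_choose_two (n : ℕ) : ∑ i : Fin n, (i : ℕ) = n.choose 2 := by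
  rw [Fin.sum_univ_eq_sum_range (fun i => i), sum_range_id, Nat.choose_two_right]

theorem Fin.sum_sub_two_mul_val_eq_zero (n : ℕ) :
    ∑ i : Fin n, ((n : ℤ) - 1 - 2 * (i : ℕ)) = 0 := by
  have hrev : ∑ i : Fin n, ((n : ℤ) - 1 - (i : ℕ)) = ∑ i : Fin n, ((i : ℕ) : ℤ) :=
    Fintype.sum_equiv Fin.revPerm _ _ fun i => by
      simp only [Fin.revPerm_apply, Fin.val_rev]; omega
  calc ∑ i : Fin n, ((n : ℤ) - 1 - 2 * (i : ℕ))
      = ∑ i : Fin n, ((n : ℤ) - 1 - (i : ℕ)) - ∑ i : Fin n, ((i : ℕ) : ℤ) := by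
        rw [← sum_sub_distrib]; congr 1; ext; ring
    _ = 0 := by rw [hrev, sub_self]

theorem sum_W_surjection_general (d : ℕ)
    (σ : Fin (d - 1) → Fin (d - 2)) (hσ : Function.Surjective σ)
    (u v : Fin (d - 1)) (huv : u ≠ v) (hfib : σ u = σ v) :
    ∑ i ∈ Finset.univ.erase u,
        ((d : ℤ) - 3 - 2 * ((σ i : ℕ) : ℤ) + ((i : ℕ) : ℤ))
      = ((d - 1).choose 2 : ℤ) - ((u : ℕ) : ℤ) := by
  have hd : 2 ≤ d := by have := u.isLt; omega
  have hcard : Fintype.card (Fin (d - 1)) = Fintype.card (Fin (d - 2)) + 1 := by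
    simp only [Fintype.card_fin]; omega
  calc ∑ i ∈ univ.erase u, ((d : ℤ) - 3 - 2 * ((σ i : ℕ) : ℤ) + ((i : ℕ) : ℤ))
      = ∑ i ∈ univ.erase u, (((d - 2 : ℕ) : ℤ) - 1 - 2 * ((σ i : ℕ) : ℤ))
          + ∑ i ∈ univ.erase u, ((i : ℕ) : ℤ) := by
        rw [← sum_add_distrib]; push_cast [hd]; ring_nf
    _ = 0 + (∑ i : Fin (d - 1), ((i : ℕ) : ℤ) - (u : ℕ)) := by
        rw [hσ.sum_comp_erase_of_eq huv hfib hcard fun b => ((d - 2 : ℕ) : ℤ) - 1 - 2 * (b : ℕ),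
          Fin.sum_sub_two_mul_val_eq_zero, sum_erase_eq_sub (mem_univ u)]
    _ = ((d - 1).choose 2 : ℤ) - ((u : ℕ) : ℤ) := by
        rw [zero_add, ← Fin.sum_val_eq_choose_two, Nat.cast_sum]

/-- Lemma `l sum u`: for the `(d-2) × (d-1)` matrix `W` with (1-based) entries
`W i j = d - 2 - 2*i + j`, and a surjection `σ : [d-1] → [d-2]` whose unique
two-element fiber is `{u, v}`, the sum of `W (σ i) i` over `i ≠ u` equals
`C(d-1, 2) + 1 - u`.  Here `Fin` indices are 0-based, so the (1-based) entry
`W (σ i) i` is `d - 2 - 2*(σ i + 1) + (i + 1) = d - 3 - 2*(σ i) + i`, and the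
(1-based) right-hand side `C(d-1,2) + 1 - u` becomes `C(d-1,2) - u.val`. -/
theorem sum_W_surjection (d : ℕ) (hd : 2 ≤ d)
    (σ : Fin (d - 1) → Fin (d - 2)) (hσ : Function.Surjective σ)
    (u v : Fin (d - 1)) (huv : u ≠ v) (hfib : σ u = σ v) :
    ∑ i ∈ Finset.univ.erase u,
        ((d : ℤ) - 3 - 2 * ((σ i : ℕ) : ℤ) + ((i : ℕ) : ℤ))
      = ((d - 1).choose 2 : ℤ) - ((u : ℕ) : ℤ) :=
  sum_W_surjection_general d σ hσ u v huv hfib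
end

section
/- For integers r ≥ 1 and a tuple ν = (ν(1),...,ν(r)) of nonnegative integers, and an indeterminate (or integer) d: ∑_{k≥0} (d)_k ∑_{s ∈ S(ν,k)} 1/(∏_{∅≠U⊆[r]} s(U)!) = ∏_{i=1}^{r} C(d, ν(i)), where (d)_k = d(d-1)···(d-k+1) is the falling factorial and S(ν,k) is the set of tuples s = (s(U)) of nonnegative integers indexed by nonempty subsets U of [r] such that ν(i) = ∑_{U ∋ i} s(U) for each i and k = ∑_{∅≠U⊆[r]} s(U). -/
/-!
Both sides are polynomial functions of `d`, so it suffices to take `d ∈ ℕ`. There both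
sides satisfy `F ν (d + 1) = ∑_{U ⊆ [r], ν > 0 on U} F (ν - 1_U) d` and `F ν 0 = [ν = 0]`. For the
product of binomial coefficients this is Pascal's rule in each factor. For the left side it
follows from `(d + 1)_m = (d)_m + m (d)_{m-1}` and `m = ∑_U s(U)` for `s ∈ S(ν, m)`: removing
one copy of `U` from `s` matches the tuples with `s(U) ≠ 0` bijectively with the tuples for
`ν - 1_U`, and turns `s(U) / ∏_V s(V)!` into `1 / ∏_V s(V)!`.
-/

/-- Falling factorial `(x)_k = x (x-1) ⋯ (x-k+1)` in `ℚ`. -/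
def fallQ (x : ℚ) (k : ℕ) : ℚ := ∏ j ∈ Finset.range k, (x - j)

open Finset Polynomial Nat

theorem Polynomial.eq_of_eval_natCast_eq {R : Type*} [CommRing R] [IsDomain R] [CharZero R]
    {p q : R[X]} (h : ∀ n : ℕ, p.eval (n : R) = q.eval (n : R)) : p = q :=
  eq_of_infinite_eval_eq p q <| (Set.infinite_range_of_injective Nat.cast_injective).mono <| by
    rintro _ ⟨n, rfl⟩
    exact h n

theorem fallQ_eq_eval (x : ℚ) (k : ℕ) : fallQ x k = (descPochhammer ℚ k).eval x :=
  (descPochhammer_eval_eq_prod_range k x).symm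

theorem fallQ_succ (x : ℚ) (k : ℕ) : fallQ x (k + 1) = fallQ x k * (x - k) :=
  prod_range_succ _ _

theorem fallQ_add_one_succ (x : ℚ) (k : ℕ) : fallQ (x + 1) (k + 1) = (x + 1) * fallQ x k := by
  simp [fallQ, prod_range_succ', mul_comm]

theorem fallQ_add_one (x : ℚ) (k : ℕ) : fallQ (x + 1) k = fallQ x k + k * fallQ x (k - 1) := by
  cases k with
  | zero => simp [fallQ]
  | succ k => rw [fallQ_add_one_succ, fallQ_succ, add_tsub_cancel_right]; push_cast; ring

theorem fallQ_zero_left (k : ℕ) : fallQ 0 k = if k = 0 then 1 else 0 := by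
  cases k with
  | zero => simp [fallQ]
  | succ k => simp [fallQ, prod_range_succ']

theorem fallQ_add_one_div_factorial (x : ℚ) (n : ℕ) :
    fallQ (x + 1) n / n ! =
      (if n ≠ 0 then fallQ x (n - 1) / (n - 1)! else 0) + fallQ x n / n ! := by
  cases n with
  | zero => simp [fallQ]
  | succ n =>
    rw [fallQ_add_one, Nat.factorial_succ]
    simp only [ne_eq, Nat.add_one_ne_zero, not_false_eq_true, if_true, add_tsub_cancel_right]
    push_cast
    field_simp
    ring

namespace SubsetCovering

variable {ι : Type*}

abbrev NonemptyFinset (ι : Type*) := {U : Finset ι // U.Nonempty}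

theorem indicator_one_le_iff {U : Finset ι} {ν : ι → ℕ} :
    (U : Set ι).indicator 1 ≤ ν ↔ ∀ i ∈ U, ν i ≠ 0 := by
  refine forall_congr' fun i => ?_
  by_cases hi : i ∈ U <;> simp [hi, Nat.one_le_iff_ne_zero]

section Binomial

variable [Fintype ι]

def binomialProduct (ν : ι → ℕ) (d : ℚ) : ℚ :=
  ∏ i, fallQ d (ν i) / ((ν i)! : ℚ)

theorem binomialProduct_zero (ν : ι → ℕ) : binomialProduct ν 0 = if ν = 0 then 1 else 0 := by
  have hfactor : ∀ n : ℕ, fallQ 0 n / n ! = if n = 0 then 1 else 0 := fun n => by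
    cases n <;> simp [fallQ_zero_left]
  simp [binomialProduct, hfactor, Fintype.prod_boole, funext_iff]

theorem binomialProduct_eq_eval (ν : ι → ℕ) (d : ℚ) :
    binomialProduct ν d =
      (∏ i, C ((ν i)! : ℚ)⁻¹ * descPochhammer ℚ (ν i)).eval d := by
  simp [binomialProduct, eval_prod, fallQ_eq_eval, div_eq_inv_mul]

end Binomial

variable [Fintype ι] [DecidableEq ι]

noncomputable def pascalStep (F : (ι → ℕ) → ℚ) (ν : ι → ℕ) : ℚ :=
  ∑ U : Finset ι, if ∀ i ∈ U, ν i ≠ 0 then F (ν - (U : Set ι).indicator 1) else 0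

theorem binomialProduct_add_one (ν : ι → ℕ) (d : ℚ) :
    binomialProduct ν (d + 1) = pascalStep (binomialProduct · d) ν := by
  rw [binomialProduct, pascalStep, prod_congr rfl fun i _ => fallQ_add_one_div_factorial d (ν i),
    prod_add, powerset_univ]
  refine sum_congr rfl fun U _ => ?_
  split_ifs with hU
  · rw [binomialProduct, ← prod_mul_prod_compl U, compl_eq_univ_sdiff]
    congr 1
    · refine prod_congr rfl fun i hi => ?_
      simp [hi, hU i hi]
    · refine prod_congr rfl fun i hi => ?_
      simp [(mem_sdiff.mp hi).2]
  · push Not at hU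
    obtain ⟨i, hi, hνi⟩ := hU
    rw [prod_eq_zero hi (by simp [hνi]), zero_mul]

theorem sum_eq_add_sum_nonempty {M : Type*} [AddCommMonoid M] (f : Finset ι → M) :
    ∑ U, f U = f ∅ + ∑ U : NonemptyFinset ι, f U := by
  rw [Fintype.sum_eq_add_sum_subtype_ne f ∅]
  congr 1
  exact Fintype.sum_equiv (Equiv.subtypeEquivRight fun U => nonempty_iff_ne_empty.symm) _ _
    fun _ => rfl

def coverage (s : NonemptyFinset ι → ℕ) (i : ι) : ℕ :=
  ∑ U, if i ∈ U.1 then s U else 0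

theorem le_coverage {s : NonemptyFinset ι → ℕ} {U : NonemptyFinset ι}
    {i : ι} (hi : i ∈ U.1) : s U ≤ coverage s i := by
  unfold coverage
  simpa [hi] using single_le_sum (f := fun V : NonemptyFinset ι =>
    if i ∈ V.1 then s V else 0) (fun _ _ => Nat.zero_le _) (mem_univ U)

@[simp] theorem coverage_zero : coverage (0 : NonemptyFinset ι → ℕ) = 0 := by
  ext i; simp [coverage]

theorem coverage_add_single (t : NonemptyFinset ι → ℕ) (U : NonemptyFinset ι) :
    coverage (t + Pi.single U 1) = coverage t + (U.1 : Set ι).indicator 1 := by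
  ext i
  simp only [coverage, Pi.add_apply, ite_add_zero, sum_add_distrib, add_right_inj]
  rw [sum_eq_single U (fun V _ hV => by simp [hV]) (by simp)]
  simp [Set.indicator_apply]

-- The paper's `S(ν, k)` is `{s ∈ coverings ν | ∑ U, s U = k}`.
def coverings (ν : ι → ℕ) : Finset (NonemptyFinset ι → ℕ) :=
  {s ∈ Fintype.piFinset fun _ => range (∑ i, ν i + 1) | coverage s = ν}

theorem mem_coverings {ν : ι → ℕ} {s : NonemptyFinset ι → ℕ} :
    s ∈ coverings ν ↔ coverage s = ν := by
  refine ⟨fun h => (mem_filter.mp h).2, fun h => mem_filter.mpr ⟨?_, h⟩⟩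
  refine Fintype.mem_piFinset.mpr fun U => mem_range_succ_iff.mpr ?_
  obtain ⟨i, hi⟩ := U.2
  calc s U ≤ coverage s i := le_coverage hi
    _ = ν i := by rw [h]
    _ ≤ ∑ j, ν j := single_le_sum (fun _ _ => Nat.zero_le _) (mem_univ i)

theorem prod_factorial_add_single (t : NonemptyFinset ι → ℕ) (U : NonemptyFinset ι) :
    ∏ V, ((t + Pi.single U 1 : NonemptyFinset ι → ℕ) V)! = (t U + 1) * ∏ V, (t V)! := by
  have hrest : ∀ V ∈ univ.erase U, ((t + Pi.single U 1 : NonemptyFinset ι → ℕ) V)! = (t V)! :=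
    fun V hV => by simp [Pi.single_eq_of_ne (ne_of_mem_erase hV)]
  rw [← mul_prod_erase univ _ (mem_univ U), ← mul_prod_erase univ (fun V => (t V)!) (mem_univ U),
    prod_congr rfl hrest]
  simp [Nat.factorial_succ, mul_assoc]

theorem sum_coverings_add_indicator (μ : ι → ℕ) (U : NonemptyFinset ι)
    (g : (NonemptyFinset ι → ℕ) → ℚ) :
    ∑ s ∈ coverings (μ + (U.1 : Set ι).indicator 1), (s U : ℚ) * g s / ∏ V, ((s V)! : ℚ) =
      ∑ t ∈ coverings μ, g (t + Pi.single U 1) / ∏ V, ((t V)! : ℚ) := by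
  set F : (NonemptyFinset ι → ℕ) → ℚ := fun s => s U * g s / ∏ V, ((s V)! : ℚ)
  have hF : ∀ t : NonemptyFinset ι → ℕ,
      F (t + Pi.single U 1) = g (t + Pi.single U 1) / ∏ V, ((t V)! : ℚ) := fun t => by
    simp only [F]
    rw [← Nat.cast_prod, prod_factorial_add_single, Pi.add_apply, Pi.single_eq_same]
    push_cast
    field_simp
  simp_rw [← hF]
  rw [← sum_image (f := F) (g := (· + Pi.single U 1)) fun _ _ _ _ h => add_right_cancel h]
  symm
  refine sum_subset ?_ fun s hs hsi => ?_
  · intro s hs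
    obtain ⟨t, ht, rfl⟩ := mem_image.mp hs
    rw [mem_coverings, coverage_add_single, mem_coverings.mp ht]
  · suffices s U = 0 by simp [F, this]
    by_contra hU
    have hle : Pi.single U 1 ≤ s := fun V => by
      rcases eq_or_ne V U with rfl | hV
      · simpa using Nat.one_le_iff_ne_zero.mpr hU
      · simp [hV]
    have hcov := mem_coverings.mp hs
    rw [← tsub_add_cancel_of_le hle, coverage_add_single] at hcov
    exact hsi (mem_image.mpr ⟨s - Pi.single U 1, mem_coverings.mpr (add_right_cancel hcov),
      tsub_add_cancel_of_le hle⟩)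

theorem sum_coverings_mul_div (ν : ι → ℕ) (U : NonemptyFinset ι)
    (g : (NonemptyFinset ι → ℕ) → ℚ) :
    ∑ s ∈ coverings ν, (s U : ℚ) * g s / ∏ V, ((s V)! : ℚ) =
      if ∀ i ∈ U.1, ν i ≠ 0 then
        ∑ t ∈ coverings (ν - (U.1 : Set ι).indicator 1),
          g (t + Pi.single U 1) / ∏ V, ((t V)! : ℚ)
      else 0 := by
  split_ifs with hU
  · rw [← sum_coverings_add_indicator, tsub_add_cancel_of_le (indicator_one_le_iff.mpr hU)]
  · push Not at hU
    obtain ⟨i, hiU, hi⟩ := hU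
    refine sum_eq_zero fun s hs => ?_
    have : s U = 0 := by simpa [mem_coverings.mp hs, hi] using le_coverage (s := s) hiU
    simp [this]

def fallingSum (ν : ι → ℕ) (d : ℚ) : ℚ :=
  ∑ s ∈ coverings ν, fallQ d (∑ U, s U) / ∏ U, ((s U)! : ℚ)

theorem fallingSum_zero (ν : ι → ℕ) : fallingSum ν 0 = if ν = 0 then 1 else 0 := by
  have hsize : ∀ s : NonemptyFinset ι → ℕ, ∑ U, s U = 0 ↔ s = 0 := fun s => by
    simp [Finset.sum_eq_zero_iff, funext_iff]
  simp only [fallingSum, fallQ_zero_left, hsize, ite_div, zero_div]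
  rw [sum_ite_eq']
  simp [mem_coverings, eq_comm]

theorem fallingSum_add_one (ν : ι → ℕ) (d : ℚ) :
    fallingSum ν (d + 1) = pascalStep (fallingSum · d) ν := by
  calc fallingSum ν (d + 1)
      = fallingSum ν d + ∑ s ∈ coverings ν,
          ∑ U, (s U : ℚ) * fallQ d (∑ V, s V - 1) / ∏ V, ((s V)! : ℚ) := by
        rw [fallingSum, fallingSum, ← sum_add_distrib]
        refine sum_congr rfl fun s _ => ?_
        rw [fallQ_add_one, ← sum_div, ← sum_mul, add_div]
        push_cast
        ring
    _ = fallingSum ν d + ∑ U : NonemptyFinset ι,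
          if ∀ i ∈ U.1, ν i ≠ 0 then fallingSum (ν - (U.1 : Set ι).indicator 1) d else 0 := by
        rw [sum_comm]
        congr 1
        refine sum_congr rfl fun U _ => ?_
        rw [sum_coverings_mul_div]
        simp [fallingSum, sum_add_distrib]
    _ = pascalStep (fallingSum · d) ν := by
        rw [pascalStep, sum_eq_add_sum_nonempty]
        simp [← Pi.zero_def]

theorem fallingSum_natCast (n : ℕ) (ν : ι → ℕ) : fallingSum ν n = binomialProduct ν n := by
  induction n generalizing ν with
  | zero => simp [fallingSum_zero, binomialProduct_zero]
  | succ n ih =>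
    push_cast
    rw [fallingSum_add_one, binomialProduct_add_one]
    simp only [ih]

theorem fallingSum_eq_eval (ν : ι → ℕ) (d : ℚ) :
    fallingSum ν d = (∑ s ∈ coverings ν,
      C (∏ U, ((s U)! : ℚ))⁻¹ * descPochhammer ℚ (∑ U, s U)).eval d := by
  simp [fallingSum, eval_finsetSum, fallQ_eq_eval, div_eq_inv_mul]

theorem fallingSum_eq_binomialProduct (ν : ι → ℕ) (d : ℚ) :
    fallingSum ν d = binomialProduct ν d := by
  rw [fallingSum_eq_eval, binomialProduct_eq_eval]
  refine congrArg (eval d) (Polynomial.eq_of_eval_natCast_eq fun n => ?_)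
  rw [← fallingSum_eq_eval, ← binomialProduct_eq_eval, fallingSum_natCast]

theorem tsum_eq_fallingSum (ν : ι → ℕ) (d : ℚ) :
    ∑' k : ℕ, fallQ d k * ∑' s : {s : NonemptyFinset ι → ℕ // (∀ i, ν i = coverage s i) ∧
      ∑ U, s U = k}, (1 : ℚ) / ∏ U, ((s.1 U)! : ℚ) = fallingSum ν d := by
  have hinner : ∀ k, ∑' s : {s : NonemptyFinset ι → ℕ // (∀ i, ν i = coverage s i) ∧
      ∑ U, s U = k}, (1 : ℚ) / ∏ U, ((s.1 U)! : ℚ) =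
        ∑ s ∈ coverings ν with ∑ U, s U = k, 1 / ∏ U, ((s U)! : ℚ) := fun k => by
    let e : {s // s ∈ {s ∈ coverings ν | ∑ U, s U = k}} ≃
        {s : NonemptyFinset ι → ℕ // (∀ i, ν i = coverage s i) ∧ ∑ U, s U = k} :=
      Equiv.subtypeEquivRight fun s => by simp [mem_coverings, funext_iff, eq_comm]
    rw [← Finset.tsum_subtype, ← e.tsum_eq]
    rfl
  calc _ = ∑' k, ∑ s ∈ coverings ν with ∑ U, s U = k,
          fallQ d (∑ U, s U) / ∏ U, ((s U)! : ℚ) := by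
        refine tsum_congr fun k => ?_
        rw [hinner, mul_sum]
        refine sum_congr rfl fun s hs => ?_
        rw [(mem_filter.mp hs).2, mul_one_div]
    _ = ∑ k ∈ (coverings ν).image (fun s => ∑ U, s U),
          ∑ s ∈ coverings ν with ∑ U, s U = k, fallQ d (∑ U, s U) / ∏ U, ((s U)! : ℚ) := by
        refine tsum_eq_sum fun k hk => ?_
        refine sum_eq_zero fun s hs => ?_
        rw [mem_filter] at hs
        exact (hk (mem_image.mpr ⟨s, hs.1, hs.2⟩)).elim
    _ = fallingSum ν d := sum_fiberwise_of_maps_to (fun s hs => mem_image_of_mem _ hs) _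

end SubsetCovering

open SubsetCovering in
theorem sum_falling_factorial_subsets_general (r : ℕ) (ν : Fin r → ℕ) (d : ℚ) :
    ∑' k : ℕ, fallQ d k *
      ∑' s : {s : {U : Finset (Fin r) // U.Nonempty} → ℕ //
          (∀ i : Fin r, ν i = ∑ U : {U : Finset (Fin r) // U.Nonempty},
              if i ∈ U.1 then s U else 0) ∧
          (∑ U : {U : Finset (Fin r) // U.Nonempty}, s U) = k},
        (1 : ℚ) / ∏ U : {U : Finset (Fin r) // U.Nonempty}, ((s.1 U).factorial : ℚ)
      = ∏ i : Fin r, fallQ d (ν i) / ((ν i).factorial : ℚ) :=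
  (tsum_eq_fallingSum ν d).trans (fallingSum_eq_binomialProduct ν d)

/-- Theorem `t su`: for `ν : Fin r → ℕ` and any `d`,
`∑_{k ≥ 0} (d)_k ∑_{s ∈ S(ν,k)} 1/∏_U s(U)! = ∏_i C(d, ν i)`, where the inner sum
is over tuples `s` of nonnegative integers indexed by nonempty subsets `U ⊆ [r]`
with `ν i = ∑_{U ∋ i} s(U)` for each `i` and `k = ∑_U s(U)`, and
`C(d, n) = (d)_n / n!` is the generalized binomial coefficient. -/
theorem sum_falling_factorial_subsets (r : ℕ) (hr : 1 ≤ r) (ν : Fin r → ℕ) (d : ℚ) :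
    ∑' k : ℕ, fallQ d k *
      ∑' s : {s : {U : Finset (Fin r) // U.Nonempty} → ℕ //
          (∀ i : Fin r, ν i = ∑ U : {U : Finset (Fin r) // U.Nonempty},
              if i ∈ U.1 then s U else 0) ∧
          (∑ U : {U : Finset (Fin r) // U.Nonempty}, s U) = k},
        (1 : ℚ) / ∏ U : {U : Finset (Fin r) // U.Nonempty}, ((s.1 U).factorial : ℚ)
      = ∏ i : Fin r, fallQ d (ν i) / ((ν i).factorial : ℚ) :=
  sum_falling_factorial_subsets_general r ν d
end

section
/- For an integer r ≥ 0, indeterminates y, x_1,...,x_r: ∏_{i=1}^{r} (y + x_i - i + 1) = ∑_{i=0}^{r} (y)_i ∑_{U ∈ P(r, r-i)} x(U), where P(r,k) is the set of k-element subsets of {1,...,r}, and for U = {U(1) < U(2) < ... < U(k)} (listed in increasing order), x(U) = ∏_{j=1}^{k} (x_{U(j)} - j + 1). -/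
/-- Falling factorial `(x)_k = x (x-1) ⋯ (x-k+1)` in a commutative ring. -/
def fallR {R : Type*} [CommRing R] (x : R) (k : ℕ) : R :=
  ∏ j ∈ Finset.range k, (x - (j : R))

/-- For a subset `U = {u_1 < u_2 < ... < u_k}` of `Fin r`,
`x(U) = ∏_{j=1}^{k} (x_{u_j} - j + 1)`; with 0-based `enum` index `p.1`,
the `j`-th (1-based) factor is `x p.2 - p.1`. -/
def xU {R : Type*} [CommRing R] {r : ℕ} (x : Fin r → R) (U : Finset (Fin r)) : R :=
  ((U.sort (· ≤ ·)).zipIdx.map fun p => x p.1 - (p.2 : R)).prod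

/-!
Induction on `r`, splitting off the last variable. A `(k+1)`-subset of `{1, …, r+1}` either
avoids `r+1`, or is `U ∪ {r+1}` with `U` a `k`-subset of `{1, …, r}`; then `r+1` is its largest,
i.e. `(k+1)`-st, element and contributes the factor `x_{r+1} - k`. So the inner sums
`S_k = xUSum x k` satisfy
`S_{k+1}(x_1, …, x_{r+1}) = S_{k+1}(x_1, …, x_r) + S_k(x_1, …, x_r) (x_{r+1} - k)`.
Multiplying the identity for `r` by `y + x_{r+1} - r = (y - i) + (x_{r+1} - j)` on the term
`(y)_i S_j` with `i + j = r`, the first summand turns `(y)_i` into `(y)_{i+1}` and the second is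
the new term of the recurrence.
-/

open Finset

theorem Finset.sort_insert_of_forall_le {α : Type*} [LinearOrder α] {s : Finset α} {a : α}
    (hle : ∀ b ∈ s, b ≤ a) (ha : a ∉ s) :
    (insert a s).sort (· ≤ ·) = s.sort (· ≤ ·) ++ [a] := by
  have hnodup : (s.sort (· ≤ ·) ++ [a]).Nodup := by
    simp [List.nodup_append, ha]
  have hsorted : (s.sort (· ≤ ·) ++ [a]).Pairwise (· ≤ ·) := by
    simpa [List.pairwise_append] using hle
  convert (List.toFinset_sort (· ≤ ·) hnodup).2 hsorted using 2
  ext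
  simp

theorem Finset.sum_powersetCard_succ_insert {α M : Type*} [DecidableEq α] [AddCommMonoid M]
    {s : Finset α} {a : α} (ha : a ∉ s) (k : ℕ) (f : Finset α → M) :
    ∑ t ∈ (insert a s).powersetCard (k + 1), f t =
      ∑ t ∈ s.powersetCard (k + 1), f t + ∑ t ∈ s.powersetCard k, f (insert a t) := by
  rw [powersetCard_succ_insert ha, sum_union, sum_image]
  · exact insert_erase_invOn.2.injOn.mono fun t ht ↦ notMem_mono (mem_powersetCard.1 ht).1 ha
  · aesop (add simp [disjoint_left, insert_subset_iff, mem_powersetCard])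

section

variable {R : Type*} [CommRing R]

lemma fallR_succ (y : R) (k : ℕ) : fallR y (k + 1) = fallR y k * (y - k) :=
  prod_range_succ _ _

lemma xU_map_castSucc {r : ℕ} (x : Fin (r + 1) → R) (U : Finset (Fin r)) :
    xU x (U.map Fin.castSuccEmb) = xU (x ∘ Fin.castSucc) U := by
  rw [xU, ← (Fin.strictMono_castSucc.strictMonoOn (U : Set (Fin r))).map_finsetSort
    Fin.castSuccEmb]
  simp only [xU, List.zipIdx_map, List.map_map]
  rfl

lemma xU_insert_last_map_castSucc {r : ℕ} (x : Fin (r + 1) → R) (U : Finset (Fin r)) :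
    xU x (insert (Fin.last r) (U.map Fin.castSuccEmb)) =
      xU (x ∘ Fin.castSucc) U * (x (Fin.last r) - #U) := by
  have hle : ∀ b ∈ U.map Fin.castSuccEmb, b ≤ Fin.last r := fun b _ ↦ Fin.le_last b
  have hnotMem : Fin.last r ∉ U.map Fin.castSuccEmb := by simp [Fin.castSucc_ne_last]
  rw [← xU_map_castSucc, xU, sort_insert_of_forall_le hle hnotMem, List.zipIdx_append,
    List.map_append, List.prod_append, ← xU]
  simp

def xUSum {r : ℕ} (x : Fin r → R) (k : ℕ) : R :=
  ∑ U ∈ univ.powersetCard k, xU x U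

lemma xUSum_zero {r : ℕ} (x : Fin r → R) : xUSum x 0 = 1 := by
  simp [xUSum, xU]

lemma xUSum_of_lt {r k : ℕ} (x : Fin r → R) (h : r < k) : xUSum x k = 0 := by
  rw [xUSum, powersetCard_eq_empty.2 (by simpa using h), sum_empty]

lemma xUSum_succ {r : ℕ} (x : Fin (r + 1) → R) (k : ℕ) :
    xUSum x (k + 1) =
      xUSum (x ∘ Fin.castSucc) (k + 1) + xUSum (x ∘ Fin.castSucc) k * (x (Fin.last r) - k) := by
  have hnotMem : Fin.last r ∉ univ.map Fin.castSuccEmb := by simp [Fin.castSucc_ne_last]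
  rw [xUSum, Fin.univ_castSuccEmb, cons_eq_insert, sum_powersetCard_succ_insert hnotMem,
    powersetCard_map, sum_map, powersetCard_map, sum_map, xUSum, xUSum, sum_mul]
  congr 1 <;> refine sum_congr rfl fun U hU ↦ ?_
  · exact xU_map_castSucc x U
  · rw [← (mem_powersetCard.1 hU).2]
    exact xU_insert_last_map_castSucc x U

lemma sum_antidiagonal_fallR_mul_xUSum_succ {r : ℕ} (y : R) (x : Fin (r + 1) → R) :
    ∑ p ∈ antidiagonal (r + 1), fallR y p.1 * xUSum x p.2 =
      (∑ p ∈ antidiagonal r, fallR y p.1 * xUSum (x ∘ Fin.castSucc) p.2) *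
        (y + x (Fin.last r) - r) := by
  set T := xUSum (x ∘ Fin.castSucc)
  set a := x (Fin.last r)
  calc ∑ p ∈ antidiagonal (r + 1), fallR y p.1 * xUSum x p.2
      = (fallR y (r + 1) * T 0 + ∑ p ∈ antidiagonal r, fallR y p.1 * T (p.2 + 1)) +
          ∑ p ∈ antidiagonal r, fallR y p.1 * T p.2 * (a - p.2) := by
        simp only [Nat.sum_antidiagonal_succ', xUSum_zero, xUSum_succ, mul_add, sum_add_distrib,
          T, a, mul_assoc]
        ring
    _ = ∑ p ∈ antidiagonal (r + 1), fallR y p.1 * T p.2 +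
          ∑ p ∈ antidiagonal r, fallR y p.1 * T p.2 * (a - p.2) := by
        rw [Nat.sum_antidiagonal_succ']
    _ = ∑ p ∈ antidiagonal r, fallR y p.1 * T p.2 * (y - p.1) +
          ∑ p ∈ antidiagonal r, fallR y p.1 * T p.2 * (a - p.2) := by
        simp only [Nat.sum_antidiagonal_succ, T, xUSum_of_lt _ (Nat.lt_succ_self r), mul_zero,
          zero_add, fallR_succ, mul_right_comm]
    _ = (∑ p ∈ antidiagonal r, fallR y p.1 * T p.2) * (y + a - r) := by
        rw [← sum_add_distrib, sum_mul]
        refine sum_congr rfl fun p hp ↦ ?_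
        rw [← mem_antidiagonal.1 hp]
        push_cast
        ring

theorem prod_eq_sum_antidiagonal_fallR_mul_xUSum {r : ℕ} (y : R) (x : Fin r → R) :
    ∏ i : Fin r, (y + x i - ((i : ℕ) : R)) =
      ∑ p ∈ antidiagonal r, fallR y p.1 * xUSum x p.2 := by
  induction r with
  | zero => simp [fallR, xUSum_zero]
  | succ r ih =>
    rw [Fin.prod_univ_castSucc, sum_antidiagonal_fallR_mul_xUSum_succ, ← ih]
    simp

end

/-- Lemma `l s exp 2`:
`∏_{i=1}^{r} (y + x_i - i + 1) = ∑_{i=0}^{r} (y)_i ∑_{U ∈ P(r, r-i)} x(U)`. -/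
theorem prod_y_add_x_eq_sum_falling {R : Type*} [CommRing R] (r : ℕ)
    (y : R) (x : Fin r → R) :
    ∏ i : Fin r, (y + x i - ((i : ℕ) : R))
      = ∑ i ∈ Finset.range (r + 1), fallR y i *
          ∑ U ∈ Finset.univ.powersetCard (r - i), xU x U := by
  rw [prod_eq_sum_antidiagonal_fallR_mul_xUSum, Nat.sum_antidiagonal_eq_sum_range_succ_mk]
  rfl
end

section
/- For a nonnegative integer m, indeterminates d, s_1,...,s_m: ∏_{i=1}^{m} (d - i + 1 + ∑_{j=1}^{i} s_j) = ∑_{i=0}^{m} (d)_i ∑_{λ ∈ L(m,i)} c_m(λ) ∏_{j=1}^{m} (s_j)_{mult_j(λ)}, where L(m,i) is the set of multisets λ of m-i integers (with multiplicity) of the form λ = (λ(i+1),...,λ(m)) satisfying 1 ≤ λ(k-1) ≤ λ(k) ≤ k for all k, mult_j(λ) is the multiplicity of j in λ, and c_m(λ) = ∏_{i=1}^{m} C(m - i + 1 - ∑_{j=i+1}^{m} mult_j(λ), mult_i(λ)). -/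
/-- The multiplicity of the value `j` in the multiset encoded by the
(weakly increasing) value function `v`. -/
def multV {m n : ℕ} (v : Fin n → Fin (m + 1)) (j : ℕ) : ℕ :=
  (Finset.univ.filter fun k => (v k : ℕ) = j).card

/-- `c_m(λ) = ∏_{i=1}^{m} C(m - i + 1 - ∑_{j=i+1}^{m} mult_j(λ), mult_i(λ))` (1-based `i`). -/
def cV {m n : ℕ} (v : Fin n → Fin (m + 1)) : ℕ :=
  ∏ idx ∈ Finset.range m,
    Nat.choose (m - idx - ∑ jj ∈ Finset.Icc (idx + 2) m, multV v jj) (multV v (idx + 1))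

/-- The set `L(m,i)` of multisets `λ = (λ(i+1), …, λ(m))` with
`1 ≤ λ(k-1) ≤ λ(k) ≤ k`, encoded as weakly increasing value functions
`v : Fin (m - i) → Fin (m+1)` with `1 ≤ v k ≤ i + 1 + k`. -/
def LSet (m i : ℕ) : Finset (Fin (m - i) → Fin (m + 1)) :=
  Finset.univ.filter fun v =>
    (∀ k l : Fin (m - i), k ≤ l → v k ≤ v l) ∧
    ∀ k : Fin (m - i), 1 ≤ (v k : ℕ) ∧ (v k : ℕ) ≤ i + 1 + (k : ℕ)

/-!
Peeling off the first factor, the product equals `(d + s₁)` times the same product for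
`(d + s₁ - 1; s₂, …, s_m)`. Writing `(d + s₁)(d + s₁ - 1)_k = (d + s₁)_{k+1}` and expanding by
Chu–Vandermonde, `(x + y)_n = ∑_a C(n, a) (x)_a (y)_{n-a}`, an induction on `m` turns the left side
into `∑_μ (d)_{m - |μ|} c_m(μ) ∏_j (s_j)_{μ_j}` over all multiplicity vectors `μ`: the binomial
produced at each step is precisely the new first factor of `c_m`.

The coefficient `c_m(μ)` vanishes unless every suffix sum satisfies `μ_t + ⋯ + μ_m ≤ m - t + 1`.
A weakly increasing tuple is determined by its multiplicities (the number of entries `≤ b` locates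
every entry), and for it the bound `λ(k) ≤ k` says exactly that the suffix condition holds. So the
surviving `μ` with `|μ| = m - i` are the multiplicity vectors of the multisets in `L(m, i)`.
-/

open Finset

section FallingFactorial

variable {R : Type*} [CommRing R]

lemma fallR_eq_smeval_descPochhammer (x : R) (k : ℕ) :
    fallR x k = (descPochhammer ℤ k).smeval x := by
  induction k with
  | zero => simp [fallR, Polynomial.smeval_one]
  | succ k ih =>
    rw [fallR, prod_range_succ, ← fallR, ih, descPochhammer_succ_right, Polynomial.smeval_mul]
    simp [Polynomial.smeval_sub, Polynomial.smeval_X, Polynomial.smeval_natCast]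

lemma fallR_succ_eq_mul_fallR_sub_one (x : R) (k : ℕ) :
    fallR x (k + 1) = x * fallR (x - 1) k := by
  simp only [fallR, prod_range_succ', Nat.cast_zero, sub_zero, Nat.cast_succ, sub_sub,
    add_comm (1 : R), mul_comm]

lemma fallR_add (x y : R) {n N : ℕ} (hn : n < N) :
    fallR (x + y) n = ∑ a ∈ range N, (n.choose a : R) * fallR x a * fallR y (n - a) := by
  rw [fallR_eq_smeval_descPochhammer, Ring.descPochhammer_smeval_add n (Commute.all x y),
    Nat.sum_antidiagonal_eq_sum_range_succ_mk,
    sum_subset (range_subset_range.2 hn) fun a _ ha => by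
      rw [Nat.choose_eq_zero_of_lt (by simpa using ha)]; simp]
  simp only [fallR_eq_smeval_descPochhammer, mul_assoc]

end FallingFactorial

section MultiplicityVector

variable {m : ℕ}

/-- Bounding `a` by `m` (past which the sum is empty) makes the predicate decidable. -/
def Admissible (μ : Fin m → ℕ) : Prop :=
  ∀ a ≤ m, ∑ t ∈ univ.filter (fun t : Fin m => a ≤ t), μ t ≤ m - a

instance : DecidablePred (Admissible (m := m)) := fun _ => by unfold Admissible; infer_instance

def multCoeff (μ : Fin m → ℕ) : ℕ :=
  ∏ t : Fin m, (m - t - ∑ j ∈ Ioi t, μ j).choose (μ t)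

lemma sum_le_of_admissible {μ : Fin m → ℕ} (hμ : Admissible μ) : ∑ t, μ t ≤ m := by
  simpa using hμ 0 (Nat.zero_le m)

lemma admissible_cons {a : ℕ} {μ : Fin m → ℕ} (ha : a + ∑ t, μ t ≤ m + 1)
    (hμ : Admissible μ) : Admissible (Fin.cons a μ : Fin (m + 1) → ℕ) := by
  intro b hb
  rw [sum_filter, Fin.sum_univ_succ, ← sum_filter]
  rcases b with _ | b
  · simpa using ha
  · simpa [Nat.succ_le_succ_iff] using hμ b (by omega)

lemma multCoeff_cons (a : ℕ) (μ : Fin m → ℕ) :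
    multCoeff (Fin.cons a μ : Fin (m + 1) → ℕ) = (m + 1 - ∑ t, μ t).choose a * multCoeff μ := by
  simp only [multCoeff, Fin.prod_univ_succ, ← Fin.map_succEmb_Ioi, sum_map]
  simp

lemma admissible_of_multCoeff_ne_zero {μ : Fin m → ℕ} (hμ : multCoeff μ ≠ 0) :
    Admissible μ := by
  induction m with
  | zero => intro a _; simp
  | succ m ih =>
    rw [← Fin.cons_self_tail μ, multCoeff_cons, mul_ne_zero_iff] at hμ
    obtain ⟨hhead, htail⟩ := hμ
    have hhead : μ 0 ≤ m + 1 - ∑ t, Fin.tail μ t := by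
      by_contra! h
      exact hhead (Nat.choose_eq_zero_of_lt h)
    have htail := ih htail
    rw [← Fin.cons_self_tail μ]
    exact admissible_cons (by have := sum_le_of_admissible htail; omega) htail

lemma multCoeff_eq_zero_of_lt_sum {μ : Fin m → ℕ} (h : m < ∑ t, μ t) : multCoeff μ = 0 := by
  by_contra hμ
  have := sum_le_of_admissible (admissible_of_multCoeff_ne_zero hμ)
  omega

end MultiplicityVector

lemma sum_piFinset_const_succ {α M : Type*} [AddCommMonoid M] (S : Finset α) (n : ℕ)
    (f : (Fin (n + 1) → α) → M) :
    ∑ μ ∈ Fintype.piFinset (fun _ => S), f μ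
      = ∑ a ∈ S, ∑ ν ∈ Fintype.piFinset (fun _ : Fin n => S), f (Fin.cons a ν) := by
  classical
  have h := filter_piFinset_eq_map_consEquiv (fun _ : Fin (n + 1) => S) (fun _ => True)
  simp only [filter_true] at h
  rw [h, sum_map, sum_product]
  rfl

section Expansion

variable {R : Type*} [CommRing R]

def shiftedProd {m : ℕ} (d : R) (s : Fin m → R) : R :=
  ∏ i : Fin m, (d - ((i : ℕ) : R) + ∑ j ∈ univ.filter (fun j => j ≤ i), s j)

lemma shiftedProd_succ {m : ℕ} (d : R) (s : Fin (m + 1) → R) :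
    shiftedProd d s = (d + s 0) * shiftedProd (d + s 0 - 1) (Fin.tail s) := by
  rw [shiftedProd, shiftedProd, Fin.prod_univ_succ]
  congr 1
  · simp [filter_eq']
  · refine prod_congr rfl fun i _ => ?_
    rw [sum_filter, Fin.sum_univ_succ, ← sum_filter, if_pos (Fin.zero_le _)]
    simp only [Fin.succ_le_succ_iff, Fin.val_succ, Fin.tail]
    push_cast
    ring

theorem shiftedProd_eq_sum_multCoeff {m N : ℕ} (hN : m < N) (d : R) (s : Fin m → R) :
    shiftedProd d s = ∑ μ ∈ Fintype.piFinset (fun _ : Fin m => range N),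
      fallR d (m - ∑ t, μ t) * multCoeff μ * ∏ t, fallR (s t) (μ t) := by
  induction m generalizing d with
  | zero =>
    simp [shiftedProd, multCoeff, fallR, Fintype.piFinset_of_isEmpty]
  | succ m ih =>
    rw [shiftedProd_succ, ih (by omega), sum_piFinset_const_succ, sum_comm, mul_sum]
    refine sum_congr rfl fun ν _ => ?_
    set P := (multCoeff ν : R) * ∏ t, fallR (s (Fin.succ t)) (ν t)
    have hcons : ∀ a, fallR d (m + 1 - ∑ t, (Fin.cons a ν : Fin (m + 1) → ℕ) t)
          * multCoeff (Fin.cons a ν : Fin (m + 1) → ℕ)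
          * ∏ t, fallR (s t) ((Fin.cons a ν : Fin (m + 1) → ℕ) t)
        = ((m + 1 - ∑ t, ν t).choose a : R) * fallR (s 0) a
          * fallR d (m + 1 - ∑ t, ν t - a) * P := by
      intro a
      rw [Fin.sum_cons, multCoeff_cons, Fin.prod_univ_succ, Nat.sub_add_eq, Nat.sub_right_comm]
      simp only [Fin.cons_zero, Fin.cons_succ, P]
      push_cast
      ring
    simp only [hcons]
    by_cases hν : ∑ t, ν t ≤ m
    · rw [← sum_mul, ← fallR_add _ _ (by omega), add_comm (s 0), ← mul_assoc, ← mul_assoc,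
        ← fallR_succ_eq_mul_fallR_sub_one, Nat.sub_add_comm hν, mul_assoc]
      rfl
    · simp [P, multCoeff_eq_zero_of_lt_sum (not_le.mp hν)]

end Expansion

section MonotoneTuple

variable {m n : ℕ}

def multVec (v : Fin n → Fin (m + 1)) (t : Fin m) : ℕ := multV v (t + 1)

lemma multVec_apply (v : Fin n → Fin (m + 1)) (t : Fin m) :
    multVec v t = #{k | v k = t.succ} := by
  simp only [multVec, multV, Fin.ext_iff, Fin.val_succ]

lemma card_lt_apply_eq_sum_multVec (v : Fin n → Fin (m + 1)) (a : ℕ) :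
    #{k | a < (v k : ℕ)} = ∑ t ∈ univ.filter (fun t : Fin m => a ≤ t), multVec v t := by
  rw [card_eq_sum_card_fiberwise (f := v) (t := univ.filter fun b : Fin (m + 1) => a < b)
    (fun k hk => by simpa using hk), sum_filter, Fin.sum_univ_succ, sum_filter]
  simp only [Fin.val_zero, Nat.not_lt_zero, if_false, zero_add, Fin.val_succ, Nat.lt_succ_iff]
  refine sum_congr rfl fun t _ => ?_
  split_ifs with h
  · rw [multVec_apply, filter_filter]
    congr 1
    ext k
    simp only [mem_filter, mem_univ, true_and, and_iff_right_iff_imp]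
    intro hk
    simp [hk, h]
  · rfl

lemma sum_multVec {v : Fin n → Fin (m + 1)} (hv : ∀ k, 0 < (v k : ℕ)) :
    ∑ t, multVec v t = n := by
  simpa [hv] using (card_lt_apply_eq_sum_multVec v 0).symm

lemma card_apply_le_eq_sub_sum_multVec (v : Fin n → Fin (m + 1)) (b : Fin (m + 1)) :
    #{k | v k ≤ b} = n - ∑ t ∈ univ.filter (fun t : Fin m => (b : ℕ) ≤ t), multVec v t := by
  have h := card_filter_add_card_filter_not (s := univ) (fun k => v k ≤ b)
  simp only [not_le, Fin.lt_def, card_univ, Fintype.card_fin] at h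
  rw [← card_lt_apply_eq_sum_multVec]
  omega

lemma Monotone.eq_of_multVec_eq {v w : Fin n → Fin (m + 1)} (hv : Monotone v) (hw : Monotone w)
    (h : multVec v = multVec w) : v = w := by
  have key : ∀ k b, v k ≤ b ↔ w k ≤ b := fun k b => by
    rw [← Tuple.lt_card_le_iff_apply_le_of_monotone hv,
      ← Tuple.lt_card_le_iff_apply_le_of_monotone hw, card_apply_le_eq_sub_sum_multVec,
      card_apply_le_eq_sub_sum_multVec, h]
  funext k
  exact le_antisymm ((key k _).2 le_rfl) ((key k _).1 le_rfl)

lemma exists_monotone_multVec_eq (μ : Fin m → ℕ) (hμ : ∑ t, μ t = n) :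
    ∃ v : Fin n → Fin (m + 1), Monotone v ∧ multVec v = μ := by
  set M : Multiset (Fin (m + 1)) := ∑ t, Multiset.replicate (μ t) t.succ
  have hcount : ∀ t : Fin m, M.count t.succ = μ t := by
    intro t
    simp [M, Multiset.count_sum', Multiset.count_replicate, Fin.succ_inj]
  have hlen : (M.sort (· ≤ ·)).length = n := by simp [M, Multiset.card_sum, hμ]
  obtain ⟨v, hv⟩ : ∃ v : Fin n → Fin (m + 1), List.ofFn v = M.sort (· ≤ ·) := by
    rw [← hlen]
    exact ⟨_, List.ofFn_getElem⟩
  refine ⟨v, List.sortedLE_ofFn_iff.1 (hv ▸ (Multiset.pairwise_sort M _).sortedLE),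
    funext fun t => ?_⟩
  rw [multVec_apply, ← hcount, ← Multiset.sort_eq M (· ≤ ·), ← hv, ← Fin.univ_val_map,
    Multiset.count_map]
  simp [eq_comm, card_def]

end MonotoneTuple

section LSet

variable {m i : ℕ}

lemma admissible_multVec_of_mem_LSet {v : Fin (m - i) → Fin (m + 1)} (hv : v ∈ LSet m i) :
    Admissible (multVec v) := by
  intro a _
  have hbound : ∀ k : Fin (m - i), (v k : ℕ) ≤ i + 1 + k := fun k => ((mem_filter.1 hv).2.2 k).2
  rw [← card_lt_apply_eq_sum_multVec]
  calc #{k | a < (v k : ℕ)} ≤ #(Ico (a - i) (m - i)) :=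
        card_le_card_of_injOn (fun k => (k : ℕ))
          (fun k hk => by
            simp only [coe_filter, Set.mem_ofPred_eq, mem_univ, true_and, coe_Ico, Set.mem_Ico]
              at hk ⊢
            have := hbound k
            omega)
          (fun _ _ _ _ h => Fin.ext h)
    _ ≤ m - a := by simp; omega

lemma mem_LSet_of_admissible {v : Fin (m - i) → Fin (m + 1)} (hmono : Monotone v)
    (hadm : Admissible (multVec v)) (hsum : ∑ t, multVec v t = m - i) : v ∈ LSet m i := by
  have hpos : ∀ k, 0 < (v k : ℕ) := by
    have h := card_lt_apply_eq_sum_multVec v 0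
    simp only [zero_le, filter_true, hsum] at h
    exact fun k => card_filter_eq_iff.1 (by rw [h]; simp) k (mem_univ k)
  refine mem_filter.2 ⟨mem_univ _, fun k l hkl => hmono hkl, fun k => ⟨hpos k, ?_⟩⟩
  by_contra! hk
  have hb : i + 1 + k < m + 1 := by omega
  have hcard := (Tuple.lt_card_le_iff_apply_le_of_monotone hmono (j := k)
    (a := ⟨i + 1 + k, hb⟩)).not.2 (by simpa [Fin.le_def] using hk)
  rw [card_apply_le_eq_sub_sum_multVec] at hcard
  have := hadm (i + 1 + k) (by omega)
  simp only at hcard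
  omega

lemma sum_LSet_eq_sum_admissible {M : Type*} [AddCommMonoid M] (g : (Fin m → ℕ) → M) :
    ∑ v ∈ LSet m i, g (multVec v)
      = ∑ μ ∈ (Fintype.piFinset fun _ : Fin m => range (m + 1)).filter
          (fun μ => Admissible μ ∧ ∑ t, μ t = m - i), g μ := by
  refine sum_nbij multVec (fun v hv => ?_) (fun v hv w hw h => ?_) (fun μ hμ => ?_)
    (fun _ _ => rfl)
  · have hsum := sum_multVec fun k => ((mem_filter.1 hv).2.2 k).1
    refine mem_filter.2 ⟨Fintype.mem_piFinset.2 fun t => mem_range.2 ?_,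
      admissible_multVec_of_mem_LSet hv, hsum⟩
    have := hsum ▸ single_le_sum (fun t _ => Nat.zero_le (multVec v t)) (mem_univ t)
    omega
  · exact Monotone.eq_of_multVec_eq (fun k l hkl => (mem_filter.1 hv).2.1 k l hkl)
      (fun k l hkl => (mem_filter.1 hw).2.1 k l hkl) h
  · obtain ⟨-, hadm, hsum⟩ := mem_filter.1 hμ
    obtain ⟨v, hmono, rfl⟩ := exists_monotone_multVec_eq μ hsum
    exact ⟨v, mem_LSet_of_admissible hmono hadm hsum, rfl⟩

lemma cV_eq_multCoeff_multVec (v : Fin (m - i) → Fin (m + 1)) :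
    cV v = multCoeff (multVec v) := by
  rw [cV, multCoeff, ← Fin.prod_univ_eq_prod_range]
  refine prod_congr rfl fun t _ => ?_
  have hIcc : Icc ((t : ℕ) + 2) m = ((Ioi t).map Fin.valEmbedding).map (addRightEmbedding 1) := by
    rw [Fin.map_valEmbedding_Ioi, map_add_right_Ioo]
    ext
    simp only [mem_Icc, mem_Ioo]
    omega
  rw [hIcc, sum_map, sum_map]
  rfl

end LSet

/-- Lemma `l s exp`:
`∏_{i=1}^{m} (d - i + 1 + ∑_{j=1}^{i} s_j)
  = ∑_{i=0}^{m} (d)_i ∑_{λ ∈ L(m,i)} c_m(λ) ∏_{j=1}^{m} (s_j)_{mult_j(λ)}`. -/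
theorem prod_d_shift_eq_sum_multisets {R : Type*} [CommRing R] (m : ℕ)
    (d : R) (s : Fin m → R) :
    ∏ i : Fin m, (d - ((i : ℕ) : R) + ∑ j ∈ Finset.univ.filter (fun j => j ≤ i), s j)
      = ∑ i ∈ Finset.range (m + 1), fallR d i *
          ∑ v ∈ LSet m i,
            (cV v : R) * ∏ j : Fin m, fallR (s j) (multV v ((j : ℕ) + 1)) := by
  set box := Fintype.piFinset fun _ : Fin m => range (m + 1)
  have hadm : ∀ μ ∈ box, fallR d (m - ∑ t, μ t) * multCoeff μ * ∏ t, fallR (s t) (μ t) ≠ 0 →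
      Admissible μ := fun μ _ h =>
    admissible_of_multCoeff_ne_zero (by rintro h0; simp [h0] at h)
  rw [← shiftedProd, shiftedProd_eq_sum_multCoeff (lt_add_one m), ← sum_filter_of_ne hadm,
    ← sum_fiberwise_of_maps_to (g := fun μ => m - ∑ t, μ t) (t := range (m + 1))
      fun μ _ => mem_range.2 (Nat.lt_succ_of_le (Nat.sub_le _ _))]
  refine sum_congr rfl fun i hi => ?_
  have hfiber : ∀ μ : Fin m → ℕ, Admissible μ → (m - ∑ t, μ t = i ↔ ∑ t, μ t = m - i) :=
    fun μ hμ => by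
    have := sum_le_of_admissible hμ
    have := mem_range_succ_iff.1 hi
    omega
  calc
    _ = ∑ μ ∈ box.filter (fun μ => Admissible μ ∧ ∑ t, μ t = m - i),
        fallR d i * ((multCoeff μ : R) * ∏ j, fallR (s j) (μ j)) := by
      rw [filter_filter]
      refine sum_congr (filter_congr fun μ _ => ?_) fun μ hμ => ?_
      · exact and_congr_right (hfiber μ)
      · rw [(mem_filter.1 hμ).2.2, Nat.sub_sub_self (mem_range_succ_iff.1 hi), mul_assoc]
    _ = _ := by
      rw [← mul_sum, ← sum_LSet_eq_sum_admissible]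
      simp only [cV_eq_multCoeff_multVec]
      rfl
end

section
/- Let d ≥ 2 and let z_1,...,z_d be the zeros of f(z) = ∑_{i=0}^{d} a_i z^i ∈ ℂ[z], with a_1 ≠ 0 and a_2 ≠ 0. If (α_0, α_1) is a common zero of the system f_{0,2}(x_0,x_1) - x_0 = 0 and f_{1,2}(x_0,x_1) - x_1 = 0 (i.e., a fixed point of NRS(2)), then α_0 = z_i + z_j for some pair of indices 1 ≤ i < j ≤ d. -/
/-!
Put `x₀ = u + v` and `(a₀ / a₁) x₁ = -u v`. The inner sums of `F0` and `F1` are then values of the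
Dickson polynomials of the second kind, `E_i(u + v, u v) = h_i(u, v) = ∑_{m ≤ i} u^m v^(i - m)`,
so `F0 = 0` says that the divided difference `(f(u) - f(v)) / (u - v) = ∑ a_{i+1} h_i(u, v)`
vanishes and `F1 = 0` says that `u v ∑ a_{i+2} h_i(u, v) = a₀`. The identity
`u v ∑ a_{i+2} h_i(u, v) + f(v) = v ∑ a_{i+1} h_i(u, v) + a₀` then gives `f(v) = 0`, so `v = z_j`;
and the divided difference at `z_j` is `a_d ∏_{k ≠ j} (u - z_k)`, so `u = z_k` with `k ≠ j`.
-/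

/-- `f_{0,2}(x_0, x_1) - x_0`, the first auxiliary polynomial of the NRS(2) method:
`∑_{i} ∑_{j=0}^{⌊i/2⌋} -(a_{i+1}/a_2) ((-a_0/a_2)(-a_1/a_2)⁻¹ x_1)^j x_0^{i-2j} C(i-j, j)`. -/
noncomputable def F0 (a : ℕ → ℂ) (d : ℕ) (x0 x1 : ℂ) : ℂ :=
  ∑ i ∈ Finset.range d, ∑ j ∈ Finset.range (i / 2 + 1),
    -(a (i + 1) / a 2) * ((-a 0 / a 2) * (-a 1 / a 2)⁻¹ * x1) ^ j * x0 ^ (i - 2 * j) *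
      ((i - j).choose j : ℂ)

/-- `f_{1,2}(x_0, x_1) - x_1`, the second auxiliary polynomial of the NRS(2) method;
the `j = -1` part of the double sum contributes exactly the constant `-(a_1/a_2)`
(from `i = -2`, using the convention `C(-1,-1) = 1`). -/
noncomputable def F1 (a : ℕ → ℂ) (d : ℕ) (x0 x1 : ℂ) : ℂ :=
  -(a 1 / a 2) +
    ∑ i ∈ Finset.range (d - 1), ∑ j ∈ Finset.range (i / 2 + 1),
      -(a (i + 2) / a 2) * ((-a 0 / a 2) * (-a 1 / a 2)⁻¹ * x1) ^ j * x0 ^ (i - 2 * j) *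
        x1 * ((i - j).choose j : ℂ)

open Finset Polynomial

theorem exists_add_eq_mul_eq {K : Type*} [Field K] [IsAlgClosed K] (s p : K) :
    ∃ u v : K, u + v = s ∧ u * v = p := by
  obtain ⟨u, hu⟩ := IsAlgClosed.exists_root (C 1 * X ^ 2 + C (-s) * X + C p)
    (by rw [degree_quadratic one_ne_zero]; decide)
  refine ⟨u, s - u, by ring, ?_⟩
  simp only [IsRoot, eval_add, eval_mul, eval_C, eval_pow, eval_X] at hu
  linear_combination -hu

section CommRing

variable {R : Type*} [CommRing R]

def hsymm₂ (u v : R) (n : ℕ) : R := ∑ m ∈ range (n + 1), u ^ m * v ^ (n - m)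

theorem hsymm₂_succ (u v : R) (n : ℕ) :
    hsymm₂ u v (n + 1) = u ^ (n + 1) + v * hsymm₂ u v n := by
  rw [hsymm₂, sum_range_succ, Nat.sub_self, pow_zero, mul_one, add_comm, hsymm₂, mul_sum]
  congr 1
  refine sum_congr rfl fun m hm => ?_
  rw [Nat.sub_add_comm (mem_range_succ_iff.mp hm), pow_succ]
  ring

theorem hsymm₂_comm (u v : R) (n : ℕ) : hsymm₂ u v n = hsymm₂ v u n := by
  rw [hsymm₂, ← sum_range_reflect]
  refine sum_congr rfl fun m hm => ?_
  rw [mul_comm, Nat.add_sub_cancel, Nat.sub_sub_self (mem_range_succ_iff.mp hm)]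

theorem hsymm₂_succ' (u v : R) (n : ℕ) :
    hsymm₂ u v (n + 1) = v ^ (n + 1) + u * hsymm₂ u v n := by
  rw [hsymm₂_comm, hsymm₂_succ, hsymm₂_comm]

theorem hsymm₂_mul_sub (u v : R) (n : ℕ) :
    hsymm₂ u v n * (u - v) = u ^ (n + 1) - v ^ (n + 1) := by
  induction n with
  | zero => simp [hsymm₂]
  | succ n ih => rw [hsymm₂_succ, add_mul, mul_assoc, ih]; ring

theorem eval_dickson_two_add_mul (u v : R) (n : ℕ) :
    (dickson 2 (u * v) n).eval (u + v) = hsymm₂ u v n := by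
  induction n using Nat.twoStepInduction with
  | zero => norm_num [hsymm₂]
  | one => simp [hsymm₂, sum_range_succ, add_comm]
  | more n ih₀ ih₁ =>
    rw [dickson_add_two, eval_sub, eval_mul, eval_mul, eval_X, eval_C, ih₀, ih₁,
      hsymm₂_succ, hsymm₂_succ, hsymm₂_succ]
    ring

def dicksonTwoTerm (a x : R) (n j : ℕ) : R := (-a) ^ j * x ^ (n - 2 * j) * ((n - j).choose j : R)

theorem dicksonTwoTerm_of_lt {a x : R} {n j : ℕ} (h : n < 2 * j) : dicksonTwoTerm a x n j = 0 := by
  simp [dicksonTwoTerm, Nat.choose_eq_zero_of_lt (by omega : n - j < j)]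

theorem dicksonTwoTerm_add_two_succ (a x : R) (n j : ℕ) :
    dicksonTwoTerm a x (n + 2) (j + 1) =
      x * dicksonTwoTerm a x (n + 1) (j + 1) + -a * dicksonTwoTerm a x n j := by
  obtain h | ⟨k, rfl⟩ : n < 2 * j ∨ ∃ k, n = 2 * j + k :=
    (lt_or_ge n (2 * j)).imp_right Nat.exists_eq_add_of_le
  · rw [dicksonTwoTerm_of_lt (by omega), dicksonTwoTerm_of_lt (by omega), dicksonTwoTerm_of_lt h]
    ring
  simp only [dicksonTwoTerm]
  cases k with
  | zero =>
    rw [show 2 * j + 0 + 2 - 2 * (j + 1) = 0 by omega,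
      show 2 * j + 0 + 2 - (j + 1) = j + 1 by omega,
      show 2 * j + 0 + 1 - (j + 1) = j by omega, show 2 * j + 0 - 2 * j = 0 by omega,
      show 2 * j + 0 - j = j by omega]
    simp only [Nat.choose_self, Nat.choose_succ_self]
    push_cast
    ring
  | succ k =>
    rw [show 2 * j + (k + 1) + 2 - (j + 1) = (j + k + 1) + 1 by omega, Nat.choose_succ_succ',
      show 2 * j + (k + 1) + 1 - (j + 1) = j + k + 1 by omega,
      show 2 * j + (k + 1) - j = j + k + 1 by omega,
      show 2 * j + (k + 1) + 2 - 2 * (j + 1) = k + 1 by omega,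
      show 2 * j + (k + 1) + 1 - 2 * (j + 1) = k by omega,
      show 2 * j + (k + 1) - 2 * j = k + 1 by omega]
    push_cast
    ring

theorem eval_dickson_two_eq_sum_range (a x : R) (n : ℕ) :
    (dickson 2 a n).eval x = ∑ j ∈ range (n + 1), dicksonTwoTerm a x n j := by
  induction n using Nat.twoStepInduction with
  | zero => norm_num [dicksonTwoTerm]
  | one => simp [dicksonTwoTerm, sum_range_succ]
  | more n ih₀ ih₁ =>
    rw [dickson_add_two, eval_sub, eval_mul, eval_mul, eval_X, eval_C, ih₀, ih₁,
      sum_range_succ' _ (n + 2), sum_range_succ' _ (n + 1)]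
    simp only [dicksonTwoTerm_add_two_succ, sum_add_distrib, ← mul_sum]
    rw [sum_range_succ (fun k => dicksonTwoTerm a x (n + 1) (k + 1)) (n + 1),
      sum_range_succ (dicksonTwoTerm a x n) (n + 1),
      dicksonTwoTerm_of_lt (by omega : n + 1 < 2 * (n + 1 + 1)),
      dicksonTwoTerm_of_lt (by omega : n < 2 * (n + 1))]
    simp only [dicksonTwoTerm, pow_zero, one_mul, Nat.sub_zero, mul_zero, Nat.choose_zero_right]
    ring

theorem eval_dickson_two (a x : R) (n : ℕ) :
    (dickson 2 a n).eval x =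
      ∑ j ∈ range (n / 2 + 1), (-a) ^ j * x ^ (n - 2 * j) * ((n - j).choose j : R) := by
  rw [eval_dickson_two_eq_sum_range]
  refine (sum_subset (fun j hj => ?_) fun j _ hj => dicksonTwoTerm_of_lt ?_).symm
  · simp only [mem_range] at hj ⊢
    omega
  · simp only [mem_range] at hj
    omega

theorem sum_mul_hsymm₂_mul_sub (a : ℕ → R) (d : ℕ) (u v : R) :
    (∑ i ∈ range d, a (i + 1) * hsymm₂ u v i) * (u - v) =
      ∑ i ∈ range (d + 1), a i * u ^ i - ∑ i ∈ range (d + 1), a i * v ^ i := by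
  induction d with
  | zero => simp
  | succ d ih =>
    rw [sum_range_succ, add_mul, ih, mul_assoc, hsymm₂_mul_sub, sum_range_succ _ (d + 1),
      sum_range_succ _ (d + 1)]
    ring

theorem mul_mul_sum_hsymm₂_add (a : ℕ → R) (d : ℕ) (u v : R) :
    u * v * ∑ i ∈ range (d - 1), a (i + 2) * hsymm₂ u v i + ∑ i ∈ range (d + 1), a i * v ^ i =
      v * ∑ i ∈ range d, a (i + 1) * hsymm₂ u v i + a 0 := by
  cases d with
  | zero => simp
  | succ d =>
    rw [Nat.add_sub_cancel]
    induction d with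
    | zero => simp [sum_range_succ, hsymm₂, add_comm, mul_comm]
    | succ d ih =>
      rw [sum_range_succ (fun i => a (i + 2) * hsymm₂ u v i),
        sum_range_succ (fun i => a i * v ^ i) (d + 2),
        sum_range_succ (fun i => a (i + 1) * hsymm₂ u v i) (d + 1), hsymm₂_succ']
      linear_combination ih

end CommRing

theorem sum_mul_hsymm₂_eq_prod_erase {d : ℕ} {a : ℕ → ℂ} {z : Fin d → ℂ}
    (hf : ∀ w : ℂ, ∑ i ∈ range (d + 1), a i * w ^ i = a d * ∏ i : Fin d, (w - z i))
    (j : Fin d) (u : ℂ) :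
    ∑ i ∈ range d, a (i + 1) * hsymm₂ u (z j) i = a d * ∏ k ∈ univ.erase j, (u - z k) := by
  have hlhs : Continuous fun u => ∑ i ∈ range d, a (i + 1) * hsymm₂ u (z j) i := by
    unfold hsymm₂
    fun_prop
  have hrhs : Continuous fun u => a d * ∏ k ∈ univ.erase j, (u - z k) := by fun_prop
  -- Off `z j` both sides are `f u / (u - z j)`; continuity covers `u = z j`.
  refine congrFun (hlhs.ext_on (dense_compl_singleton (z j)) hrhs fun u (hu : u ≠ z j) => ?_) u
  have hfz : ∏ k, (z j - z k) = 0 := prod_eq_zero (mem_univ j) (sub_self _)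
  apply mul_right_cancel₀ (sub_ne_zero.mpr hu)
  rw [sum_mul_hsymm₂_mul_sub, hf, hf, hfz, mul_zero, sub_zero,
    ← mul_prod_erase univ (fun k => u - z k) (mem_univ j)]
  ring

theorem F0_eq_sum_hsymm₂ {a : ℕ → ℂ} {d : ℕ} {x0 x1 u v : ℂ} (hs : u + v = x0)
    (hp : u * v = -((-a 0 / a 2) * (-a 1 / a 2)⁻¹ * x1)) :
    F0 a d x0 x1 = -(∑ i ∈ range d, a (i + 1) * hsymm₂ u v i) / a 2 := by
  rw [F0, neg_eq_iff_eq_neg.mp hp.symm, ← hs, neg_div, sum_div, ← sum_neg_distrib]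
  refine sum_congr rfl fun i _ => ?_
  rw [← eval_dickson_two_add_mul, eval_dickson_two, mul_sum, sum_div, ← sum_neg_distrib]
  refine sum_congr rfl fun j _ => ?_
  ring

theorem F1_eq_sum_hsymm₂ {a : ℕ → ℂ} {d : ℕ} {x0 x1 u v : ℂ} (hs : u + v = x0)
    (hp : u * v = -((-a 0 / a 2) * (-a 1 / a 2)⁻¹ * x1)) :
    F1 a d x0 x1 = -(a 1 + x1 * ∑ i ∈ range (d - 1), a (i + 2) * hsymm₂ u v i) / a 2 := by
  rw [F1, neg_eq_iff_eq_neg.mp hp.symm, ← hs, neg_div, add_div, neg_add, mul_sum, sum_div,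
    ← sum_neg_distrib]
  congr 1
  refine sum_congr rfl fun i _ => ?_
  rw [← eval_dickson_two_add_mul, eval_dickson_two, mul_sum, mul_sum, sum_div, ← sum_neg_distrib]
  refine sum_congr rfl fun j _ => ?_
  ring

theorem nrs2_fixed_point_first_coordinate_general (d : ℕ) (a : ℕ → ℂ)
    (z : Fin d → ℂ) (ha1 : a 1 ≠ 0) (ha2 : a 2 ≠ 0) (had : a d ≠ 0)
    (hf : ∀ w : ℂ, ∑ i ∈ Finset.range (d + 1), a i * w ^ i = a d * ∏ i : Fin d, (w - z i))
    (α0 α1 : ℂ) (h0 : F0 a d α0 α1 = 0) (h1 : F1 a d α0 α1 = 0) :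
    ∃ i j : Fin d, i < j ∧ α0 = z i + z j := by
  obtain ⟨u, v, hs, hp⟩ := exists_add_eq_mul_eq α0 (-((-a 0 / a 2) * (-a 1 / a 2)⁻¹ * α1))
  rw [F0_eq_sum_hsymm₂ hs hp, div_eq_zero_iff, neg_eq_zero, or_iff_left ha2] at h0
  rw [F1_eq_sum_hsymm₂ hs hp, div_eq_zero_iff, neg_eq_zero, or_iff_left ha2] at h1
  have hα1 : α1 ≠ 0 := by
    rintro rfl
    exact ha1 (by simpa using h1)
  have hS2 : u * v * ∑ i ∈ range (d - 1), a (i + 2) * hsymm₂ u v i = a 0 := by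
    have hpa : a 1 * (u * v) = -(a 0 * α1) := by
      rw [hp]
      field_simp
    refine mul_left_cancel₀ hα1 ?_
    linear_combination u * v * h1 - hpa
  have hv : a d * ∏ i : Fin d, (v - z i) = 0 := by
    rw [← hf]
    linear_combination mul_mul_sum_hsymm₂_add a d u v - hS2 + v * h0
  obtain ⟨j, -, hj⟩ := prod_eq_zero_iff.mp ((mul_eq_zero.mp hv).resolve_left had)
  obtain rfl := sub_eq_zero.mp hj
  rw [sum_mul_hsymm₂_eq_prod_erase hf] at h0
  obtain ⟨k, hk, hk'⟩ := prod_eq_zero_iff.mp ((mul_eq_zero.mp h0).resolve_left had)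
  obtain rfl := sub_eq_zero.mp hk'
  rcases lt_or_gt_of_ne (ne_of_mem_erase hk) with h | h
  · exact ⟨k, j, h, hs.symm⟩
  · exact ⟨j, k, h, by rw [← hs, add_comm]⟩

/-- Theorem `t v02`: if `(α_0, α_1)` is a common zero of the NRS(2) system attached to a
degree-`d` polynomial `f` with zeros `z_1, …, z_d` and `a_1, a_2 ≠ 0`, then
`α_0 = z_i + z_j` for some `i < j`. -/
theorem nrs2_fixed_point_first_coordinate (d : ℕ) (hd : 2 ≤ d) (a : ℕ → ℂ)
    (z : Fin d → ℂ) (ha1 : a 1 ≠ 0) (ha2 : a 2 ≠ 0) (had : a d ≠ 0)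
    (hf : ∀ w : ℂ, ∑ i ∈ Finset.range (d + 1), a i * w ^ i = a d * ∏ i : Fin d, (w - z i))
    (α0 α1 : ℂ) (h0 : F0 a d α0 α1 = 0) (h1 : F1 a d α0 α1 = 0) :
    ∃ i j : Fin d, i < j ∧ α0 = z i + z j :=
  nrs2_fixed_point_first_coordinate_general d a z ha1 ha2 had hf α0 α1 h0 h1
end

section
/- For every integer r ≥ 1, there is a bijection f from A(r), the set of adjacency matrices of directed graphs on r vertices with no multiple edges, no loops, and no 2-cycles, to B(r-1, r), the set of 'recursively size-bounded' sequences of length r-1 of subsets of [r]; moreover this bijection preserves column sums, i.e., the in-degree sequence of the graph M equals the multiplicity vector ρ_1(f(M)), where ρ_1(σ)(j) = #{i : j ∈ σ(i)}. -/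
/-- The reduction map `R_j`: remove the first set containing `j` and delete `j`
from all later sets; if `j` occurs in no set, drop the last set. -/
def Rred {r : ℕ} (j : Fin r) (σ : List (Finset (Fin r))) : List (Finset (Fin r)) :=
  match σ.findIdx? (fun s => decide (j ∈ s)) with
  | none => σ.dropLast
  | some l => σ.take l ++ (σ.drop (l + 1)).map fun s => s.erase j

/-- A sequence `σ = (σ(1), …, σ(k))` of subsets is size-bounded if `|σ(i)| ≤ i`
for all `i` (1-based). -/
def SizeBounded {r : ℕ} (σ : List (Finset (Fin r))) : Prop :=
  ∀ i (h : i < σ.length), (σ.get ⟨i, h⟩).card ≤ i + 1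

/-- `σ ∈ B(r-1, r)`: `σ` is a size-bounded sequence of length `r - 1` such that
`R_i ∘ R_{i+1} ∘ ⋯ ∘ R_r (σ)` is size-bounded for each `1 ≤ i ≤ r`
(elements `1, …, r` are encoded by `Fin r`). -/
def MemB (r : ℕ) (σ : List (Finset (Fin r))) : Prop :=
  σ.length = r - 1 ∧ SizeBounded σ ∧
    ∀ i ∈ Finset.Icc 1 r,
      SizeBounded (List.foldl (fun τ t => Rred t τ) σ
        (((List.finRange r).drop (i - 1)).reverse))

/-- Multiplicity vector of a sequence of subsets: `ρ₁(σ)(j) = #{i : j ∈ σ(i)}`. -/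
def rho1 {r : ℕ} (σ : List (Finset (Fin r))) (j : Fin r) : ℕ :=
  σ.countP fun s => decide (j ∈ s)

/-- In-degree vector of an adjacency matrix: `ρ₂(M)(j) = ∑_i M_{i,j}`. -/
def rho2 {r : ℕ} (M : Fin r → Fin r → Bool) (j : Fin r) : ℕ :=
  (Finset.univ.filter fun i => M i j = true).card

/-!
Induction on the number of vertices, `v = L + 1` being the last one. A graph on `{0, …, L + 1}`
is a graph on `{0, …, L}` together with the disjoint out- and in-neighbourhoods `S`, `T` of `v`.
Dually, a sequence `σ` of length `L + 1` is recursively size-bounded iff it is size-bounded and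
`R_v σ` is; and `σ` is recovered from `R_v σ`, the set `S` that `R_v` removes (less `v`) and the
set `W` of positions of the sets containing `v`, size-boundedness of `σ` amounting to
`W ⊆ [|S|, L]`. As `[|S|, L]` and `{0, …, L} \ S` have the same size, `T` can be traded for `W`
by any cardinality-preserving bijection of subsets; in-degrees and multiplicities then both grow
by the indicator of `S` plus `|T| = |W|` at `v`.
-/

namespace DsgEncoding

variable {r : ℕ}

/-! ### Reduction maps and positions -/

theorem map_erase_eq_self {j : Fin r} {σ : List (Finset (Fin r))} (h : ∀ s ∈ σ, j ∉ s) :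
    σ.map (·.erase j) = σ :=
  (List.map_congr_left fun s hs => Finset.erase_eq_of_notMem (h s hs)).trans (List.map_id' σ)

theorem Rred_nil (j : Fin r) : Rred j [] = [] := rfl

def positionsOf (j : Fin r) (σ : List (Finset (Fin r))) : Finset ℕ :=
  (Finset.range σ.length).filter fun p => j ∈ σ.getD p ∅

theorem mem_positionsOf {j : Fin r} {σ : List (Finset (Fin r))} {p : ℕ} :
    p ∈ positionsOf j σ ↔ ∃ h : p < σ.length, j ∈ σ[p] := by
  simp only [positionsOf, Finset.mem_filter, Finset.mem_range]
  constructor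
  · rintro ⟨hp, hj⟩
    exact ⟨hp, by rwa [List.getD_eq_getElem _ _ hp] at hj⟩
  · rintro ⟨hp, hj⟩
    exact ⟨hp, by rwa [List.getD_eq_getElem _ _ hp]⟩

theorem positionsOf_cons (j : Fin r) (s : Finset (Fin r)) (σ : List (Finset (Fin r))) :
    positionsOf j (s :: σ) =
      (if j ∈ s then {0} else ∅) ∪ (positionsOf j σ).map ⟨Nat.succ, Nat.succ_injective⟩ := by
  ext p
  cases p <;> by_cases hj : j ∈ s <;> simp [mem_positionsOf, hj]

theorem rho1_eq_card_positionsOf (σ : List (Finset (Fin r))) (j : Fin r) :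
    rho1 σ j = (positionsOf j σ).card := by
  induction σ with
  | nil => rfl
  | cons s σ ih =>
    rw [positionsOf_cons, Finset.card_union_of_disjoint (by split_ifs <;> simp), rho1,
      List.countP_cons, ← rho1, ih, Finset.card_map]
    by_cases hj : j ∈ s <;> simp [hj, add_comm]

def firstOr (W : Finset ℕ) (n : ℕ) : ℕ :=
  if h : W.Nonempty then W.min' h else n

theorem firstOr_le_of_mem {W : Finset ℕ} {n p : ℕ} (hp : p ∈ W) : firstOr W n ≤ p := by
  rw [firstOr, dif_pos ⟨p, hp⟩]
  exact W.min'_le p hp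

theorem firstOr_mem {W : Finset ℕ} {n : ℕ} (h : W.Nonempty) : firstOr W n ∈ W := by
  rw [firstOr, dif_pos h]
  exact W.min'_mem h

theorem firstOr_empty (n : ℕ) : firstOr ∅ n = n := rfl

theorem firstOr_le {W : Finset ℕ} {n : ℕ} (hW : W ⊆ Finset.range (n + 1)) : firstOr W n ≤ n := by
  by_cases h : W.Nonempty
  · have := Finset.mem_range.1 (hW (firstOr_mem (n := n) h))
    omega
  · rw [Finset.not_nonempty_iff_eq_empty.1 h, firstOr_empty]

def removedIndex (j : Fin r) (σ : List (Finset (Fin r))) : ℕ :=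
  firstOr (positionsOf j σ) (σ.length - 1)

theorem removedIndex_lt {j : Fin r} {σ : List (Finset (Fin r))} (hσ : σ ≠ []) :
    removedIndex j σ < σ.length := by
  have hlen := List.length_pos_iff.2 hσ
  have := firstOr_le (n := σ.length - 1) (W := positionsOf j σ)
    (fun p hp => by have := (mem_positionsOf.1 hp).1; simp; omega)
  exact lt_of_le_of_lt this (by omega)

theorem Rred_eq_map_eraseIdx (j : Fin r) (σ : List (Finset (Fin r))) :
    Rred j σ = (σ.eraseIdx (removedIndex j σ)).map (·.erase j) := by
  unfold Rred
  split
  · rename_i hnone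
    have hj : ∀ s ∈ σ, j ∉ s := by simpa using List.findIdx?_eq_none_iff.1 hnone
    have hpos : positionsOf j σ = ∅ := Finset.eq_empty_of_forall_notMem fun p hp =>
      have ⟨_, hp⟩ := mem_positionsOf.1 hp; hj _ (List.getElem_mem _) hp
    rw [removedIndex, hpos, firstOr_empty, List.eraseIdx_length_sub_one,
      map_erase_eq_self fun s hs => hj s (List.mem_of_mem_dropLast hs)]
  · rename_i l hl
    obtain ⟨hlσ, hjl, hbefore⟩ := List.findIdx?_eq_some_iff_getElem.1 hl
    have hidx : removedIndex j σ = l := by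
      have hmem : l ∈ positionsOf j σ := mem_positionsOf.2 ⟨hlσ, by simpa using hjl⟩
      refine le_antisymm (firstOr_le_of_mem hmem) ?_
      rw [removedIndex, firstOr, dif_pos ⟨l, hmem⟩]
      refine Finset.le_min' _ _ _ fun p hp => ?_
      obtain ⟨hp, hjp⟩ := mem_positionsOf.1 hp
      by_contra! hpl
      exact hbefore p hpl (by simpa using hjp)
    rw [hidx, List.eraseIdx_eq_take_drop_succ, List.map_append]
    congr 1
    refine (map_erase_eq_self fun s hs hjs => ?_).symm
    obtain ⟨m, hm, rfl⟩ := List.getElem_of_mem hs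
    simp only [List.length_take] at hm
    exact hbefore m (by omega) (by simpa using hjs)

theorem length_Rred (j : Fin r) (σ : List (Finset (Fin r))) :
    (Rred j σ).length = σ.length - 1 := by
  rcases eq_or_ne σ [] with rfl | hσ
  · rfl
  · rw [Rred_eq_map_eraseIdx, List.length_map, List.length_eraseIdx_of_lt (removedIndex_lt hσ)]

theorem exists_eq_erase_of_mem_Rred {j : Fin r} {σ : List (Finset (Fin r))}
    {s : Finset (Fin r)} (hs : s ∈ Rred j σ) : ∃ t ∈ σ, s = t.erase j := by
  rw [Rred_eq_map_eraseIdx, List.mem_map] at hs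
  obtain ⟨t, ht, rfl⟩ := hs
  exact ⟨t, List.mem_of_mem_eraseIdx ht, rfl⟩

/-! ### Recursively size-bounded sequences -/

def upTo (L : ℕ) : Finset (Fin r) := Finset.univ.filter fun x => (x : ℕ) ≤ L

@[simp]
theorem mem_upTo {L : ℕ} {x : Fin r} : x ∈ upTo L ↔ (x : ℕ) ≤ L := by simp [upTo]

theorem notMem_upTo {L : ℕ} {v : Fin r} (hv : L < v) : v ∉ upTo L := by
  simp only [mem_upTo]; omega

theorem notMem_of_subset_upTo {L : ℕ} {v : Fin r} {S : Finset (Fin r)} (hv : L < v)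
    (hS : S ⊆ upTo L) : v ∉ S :=
  fun h => notMem_upTo hv (hS h)

theorem card_upTo {L : ℕ} (hL : L < r) : (upTo L : Finset (Fin r)).card = L + 1 := by
  simp only [upTo, ← Nat.lt_succ_iff, Fin.card_filter_val_lt]
  omega

theorem sizeBounded_iff {σ : List (Finset (Fin r))} :
    SizeBounded σ ↔ ∀ i (h : i < σ.length), σ[i].card ≤ i + 1 := Iff.rfl

/-- `R_k ∘ R_{k+1} ∘ ⋯ ∘ R_L`. -/
def reduceRange (k L : ℕ) (σ : List (Finset (Fin r))) : List (Finset (Fin r)) :=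
  (((List.finRange r).take (L + 1)).drop k).foldr Rred σ

theorem reduceRange_self (L : ℕ) (σ : List (Finset (Fin r))) : reduceRange (L + 1) L σ = σ := by
  simp [reduceRange]

theorem reduceRange_succ {k L : ℕ} (hL : L + 1 < r) (hk : k ≤ L + 1) (σ : List (Finset (Fin r))) :
    reduceRange k (L + 1) σ = reduceRange k L (Rred ⟨L + 1, hL⟩ σ) := by
  have htake :
      (List.finRange r).take (L + 2) = (List.finRange r).take (L + 1) ++ [⟨L + 1, hL⟩] := by
    rw [List.take_add_one, List.getElem?_eq_getElem (by simpa using hL)]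
    simp
  rw [reduceRange, htake, List.drop_append_of_le_length (by simp; omega), List.foldr_append]
  rfl

theorem reduceRange_nil (k L : ℕ) : reduceRange k L ([] : List (Finset (Fin r))) = [] := by
  unfold reduceRange
  induction ((List.finRange r).take (L + 1)).drop k with
  | nil => rfl
  | cons t l ih => rw [List.foldr_cons, ih, Rred_nil]

def RecBounded (L : ℕ) (σ : List (Finset (Fin r))) : Prop :=
  σ.length = L ∧ (∀ s ∈ σ, s ⊆ upTo L) ∧ ∀ k ≤ L + 1, SizeBounded (reduceRange k L σ)

theorem RecBounded.notMem {L : ℕ} {τ : List (Finset (Fin r))} (hτ : RecBounded L τ)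
    {v : Fin r} (hv : L < v) : ∀ s ∈ τ, v ∉ s :=
  fun s hs => notMem_of_subset_upTo hv (hτ.2.1 s hs)

theorem RecBounded.sizeBounded {L : ℕ} {σ : List (Finset (Fin r))} (h : RecBounded L σ) :
    SizeBounded σ :=
  reduceRange_self L σ ▸ h.2.2 (L + 1) le_rfl

theorem RecBounded.ne_nil {L : ℕ} {σ : List (Finset (Fin r))} (h : RecBounded (L + 1) σ) :
    σ ≠ [] :=
  List.ne_nil_of_length_pos (h.1 ▸ Nat.succ_pos L)

theorem recBounded_zero_iff {σ : List (Finset (Fin r))} : RecBounded 0 σ ↔ σ = [] := by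
  refine ⟨fun h => List.length_eq_zero_iff.1 h.1, ?_⟩
  rintro rfl
  refine ⟨rfl, by simp, fun k _ => ?_⟩
  rw [reduceRange_nil]
  intro i hi
  simp at hi

theorem subset_upTo_of_mem_Rred {L : ℕ} (hL : L + 1 < r) {σ : List (Finset (Fin r))}
    (hσ : ∀ s ∈ σ, s ⊆ upTo (L + 1)) : ∀ s ∈ Rred ⟨L + 1, hL⟩ σ, s ⊆ upTo L := by
  intro s hs x hx
  obtain ⟨t, ht, rfl⟩ := exists_eq_erase_of_mem_Rred hs
  have hxv := Finset.ne_of_mem_erase hx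
  have := mem_upTo.1 (hσ t ht (Finset.mem_of_mem_erase hx))
  rw [mem_upTo]
  exact Nat.le_of_lt_succ (lt_of_le_of_ne this fun h => hxv (Fin.ext h))

theorem recBounded_succ_iff {L : ℕ} (hL : L + 1 < r) {σ : List (Finset (Fin r))} :
    RecBounded (L + 1) σ ↔ σ.length = L + 1 ∧ (∀ s ∈ σ, s ⊆ upTo (L + 1)) ∧ SizeBounded σ ∧
      RecBounded L (Rred ⟨L + 1, hL⟩ σ) := by
  constructor
  · intro h
    refine ⟨h.1, h.2.1, h.sizeBounded, by rw [length_Rred, h.1]; rfl,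
      subset_upTo_of_mem_Rred hL h.2.1, fun k hk => ?_⟩
    rw [← reduceRange_succ hL hk]
    exact h.2.2 k (by omega)
  · rintro ⟨hlen, hsub, hσ, -, -, hred⟩
    refine ⟨hlen, hsub, fun k hk => ?_⟩
    rcases Nat.lt_or_ge (L + 1) k with hk' | hk'
    · rwa [show k = L + 2 by omega, reduceRange_self]
    · rw [reduceRange_succ hL hk']
      exact hred k hk'

theorem memB_iff_recBounded (hr : 1 ≤ r) (σ : List (Finset (Fin r))) :
    MemB r σ ↔ RecBounded (r - 1) σ := by
  have hreduce : ∀ k, List.foldl (fun τ t => Rred t τ) σ (((List.finRange r).drop k).reverse) =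
      reduceRange k (r - 1) σ := by
    intro k
    rw [List.foldl_reverse, reduceRange, Nat.sub_add_cancel hr,
      List.take_of_length_le (by simp)]
  have hsub : ∀ s ∈ σ, s ⊆ upTo (r - 1) := fun s _ x _ => mem_upTo.2 (by omega)
  simp only [MemB, RecBounded, hreduce, Finset.mem_Icc]
  constructor
  · rintro ⟨hlen, hσ, hred⟩
    refine ⟨hlen, hsub, fun k hk => ?_⟩
    rcases Nat.lt_or_ge k r with hk' | hk'
    · simpa using hred (k + 1) ⟨by omega, by omega⟩
    · rwa [show k = r - 1 + 1 by omega, reduceRange_self]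
  · rintro ⟨hlen, -, hred⟩
    exact ⟨hlen, reduceRange_self (r - 1) σ ▸ hred (r - 1 + 1) le_rfl,
      fun i hi => hred (i - 1) (by omega)⟩

/-! ### Adding and deleting a vertex -/

def OrientedUpTo (L : ℕ) (M : Fin r → Fin r → Bool) : Prop :=
  (∀ i, M i i = false) ∧ (∀ i j, M i j = true → M j i = false) ∧
    ∀ i j, M i j = true → (i : ℕ) ≤ L ∧ (j : ℕ) ≤ L

def addVertex (v : Fin r) (S T : Finset (Fin r)) (M : Fin r → Fin r → Bool) :
    Fin r → Fin r → Bool :=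
  fun i j => if i = v then decide (j ∈ S) else if j = v then decide (i ∈ T) else M i j

def deleteVertex (v : Fin r) (M : Fin r → Fin r → Bool) : Fin r → Fin r → Bool :=
  fun i j => if i = v ∨ j = v then false else M i j

def outNeighbors (v : Fin r) (M : Fin r → Fin r → Bool) : Finset (Fin r) :=
  Finset.univ.filter fun j => M v j = true

def inNeighbors (v : Fin r) (M : Fin r → Fin r → Bool) : Finset (Fin r) :=
  Finset.univ.filter fun i => M i v = true

section Matrices

variable {L : ℕ} {v : Fin r} {S T : Finset (Fin r)} {M : Fin r → Fin r → Bool}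

theorem OrientedUpTo.eq_false_of_lt (hM : OrientedUpTo L M) (hv : L < v) (i : Fin r) :
    M v i = false ∧ M i v = false := by
  constructor <;> rw [Bool.eq_false_iff] <;> intro h
  · exact absurd (hM.2.2 _ _ h).1 (by omega)
  · exact absurd (hM.2.2 _ _ h).2 (by omega)

theorem orientedUpTo_deleteVertex (hM : OrientedUpTo (L + 1) M) (hv : (v : ℕ) = L + 1) :
    OrientedUpTo L (deleteVertex v M) := by
  refine ⟨fun i => by simp [deleteVertex, hM.1 i], fun i j hij => ?_, fun i j hij => ?_⟩ <;>
    by_cases h : i = v ∨ j = v <;>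
    simp only [deleteVertex, h, if_true, if_false, Bool.false_eq_true] at hij
  · simp [deleteVertex, hM.2.1 i j hij, or_comm, h]
  · have := hM.2.2 i j hij
    have hi : (i : ℕ) ≠ L + 1 := fun hi => h (.inl (Fin.ext (hi.trans hv.symm)))
    have hj : (j : ℕ) ≠ L + 1 := fun hj => h (.inr (Fin.ext (hj.trans hv.symm)))
    omega

theorem outNeighbors_subset (hM : OrientedUpTo (L + 1) M) (hv : (v : ℕ) = L + 1) :
    outNeighbors v M ⊆ upTo L := by
  intro j hj
  simp only [outNeighbors, Finset.mem_filter, Finset.mem_univ, true_and] at hj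
  have hjv : j ≠ v := by rintro rfl; simp [hM.1 j] at hj
  have := (hM.2.2 v j hj).2
  rw [mem_upTo]
  have : (j : ℕ) ≠ L + 1 := fun h => hjv (Fin.ext (h.trans hv.symm))
  omega

theorem inNeighbors_subset (hM : OrientedUpTo (L + 1) M) (hv : (v : ℕ) = L + 1) :
    inNeighbors v M ⊆ upTo L \ outNeighbors v M := by
  intro i hi
  simp only [inNeighbors, outNeighbors, Finset.mem_filter, Finset.mem_univ, true_and,
    Finset.mem_sdiff] at hi ⊢
  have hiv : i ≠ v := by rintro rfl; simp [hM.1 i] at hi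
  have := (hM.2.2 i v hi).1
  have : (i : ℕ) ≠ L + 1 := fun h => hiv (Fin.ext (h.trans hv.symm))
  exact ⟨mem_upTo.2 (by omega), by simp [hM.2.1 i v hi]⟩

theorem orientedUpTo_addVertex (hM : OrientedUpTo L M) (hv : (v : ℕ) = L + 1)
    (hS : S ⊆ upTo L) (hT : T ⊆ upTo L \ S) : OrientedUpTo (L + 1) (addVertex v S T M) := by
  have hvS : v ∉ S := notMem_of_subset_upTo (by omega) hS
  have hTS : ∀ i ∈ T, i ∉ S := fun i hi => (Finset.mem_sdiff.1 (hT hi)).2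
  have hST : ∀ i ∈ S, i ∉ T := fun i hiS hiT => hTS i hiT hiS
  refine ⟨fun i => ?_, fun i j hij => ?_, fun i j hij => ?_⟩
  · by_cases hi : i = v <;> simp [addVertex, hi, hvS, hM.1 i]
  · have := hM.2.1 i j
    unfold addVertex at hij ⊢
    split_ifs at hij ⊢ <;> simp_all
  · unfold addVertex at hij
    split_ifs at hij with hi hj
    · have := mem_upTo.1 (hS (of_decide_eq_true hij))
      omega
    · have := mem_upTo.1 (Finset.mem_sdiff.1 (hT (of_decide_eq_true hij))).1
      omega
    · have := hM.2.2 i j hij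
      omega

theorem addVertex_deleteVertex (hM : M v v = false) :
    addVertex v (outNeighbors v M) (inNeighbors v M) (deleteVertex v M) = M := by
  funext i j
  by_cases hi : i = v <;> by_cases hj : j = v <;>
    simp [addVertex, deleteVertex, outNeighbors, inNeighbors, hi, hj, hM]

theorem deleteVertex_addVertex (hM : ∀ i, M v i = false ∧ M i v = false) :
    deleteVertex v (addVertex v S T M) = M := by
  funext i j
  by_cases hi : i = v <;> by_cases hj : j = v <;>
    simp [addVertex, deleteVertex, hi, hj, (hM _).1, (hM _).2]

theorem outNeighbors_addVertex : outNeighbors v (addVertex v S T M) = S := by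
  ext j
  simp [outNeighbors, addVertex]

theorem inNeighbors_addVertex (hvS : v ∉ S) (hvT : v ∉ T) :
    inNeighbors v (addVertex v S T M) = T := by
  ext i
  by_cases hi : i = v
  · subst hi; simp [inNeighbors, addVertex, hvS, hvT]
  · simp [inNeighbors, addVertex, hi]

theorem rho2_addVertex (hM : ∀ i, M v i = false ∧ M i v = false) (hvS : v ∉ S) (hvT : v ∉ T)
    (j : Fin r) :
    rho2 (addVertex v S T M) j =
      rho2 M j + (if j ∈ S then 1 else 0) + if j = v then T.card else 0 := by
  by_cases hj : j = v
  · subst hj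
    have hT : Finset.univ.filter (fun i => addVertex j S T M i j = true) = T := by
      ext i
      by_cases hi : i = j <;> simp [addVertex, hi, hvS, hvT]
    simp [rho2, hT, hvS, (hM _).2]
  · have hfilter : Finset.univ.filter (fun i => addVertex v S T M i j = true) =
        (if j ∈ S then {v} else ∅) ∪ Finset.univ.filter (fun i => M i j = true) := by
      ext i
      by_cases hi : i = v
      · subst hi; by_cases hjS : j ∈ S <;> simp [addVertex, hjS, (hM j).1]
      · by_cases hjS : j ∈ S <;> simp [addVertex, hi, hj, hjS]
    rw [rho2, hfilter, Finset.card_union_of_disjoint (by split_ifs <;> simp [(hM j).1])]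
    split_ifs <;> simp [rho2, add_comm]

end Matrices

/-! ### Inserting a vertex into a sequence -/

def insertVertex (v : Fin r) (S : Finset (Fin r)) (W : Finset ℕ) (τ : List (Finset (Fin r))) :
    List (Finset (Fin r)) :=
  (τ.insertIdx (firstOr W τ.length) S).mapIdx fun p s => if p ∈ W then insert v s else s

def removedSet (j : Fin r) (σ : List (Finset (Fin r))) : Finset (Fin r) :=
  (σ.getD (removedIndex j σ) ∅).erase j

section Sequences

variable {L : ℕ} {v : Fin r} {S : Finset (Fin r)} {W : Finset ℕ} {τ σ : List (Finset (Fin r))}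

theorem length_insertVertex (hW : W ⊆ Finset.range (τ.length + 1)) :
    (insertVertex v S W τ).length = τ.length + 1 := by
  rw [insertVertex, List.length_mapIdx, List.length_insertIdx_of_le_length (firstOr_le hW)]

theorem notMem_of_mem_insertIdx (hτ : ∀ s ∈ τ, v ∉ s) (hvS : v ∉ S) {l : ℕ} :
    ∀ s ∈ τ.insertIdx l S, v ∉ s := fun s hs =>
  (List.mem_cons.1 (List.insertIdx_subset_cons _ _ _ hs)).elim (· ▸ hvS) (hτ s)

theorem map_erase_insertVertex (hτ : ∀ s ∈ τ, v ∉ s) (hvS : v ∉ S) :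
    (insertVertex v S W τ).map (·.erase v) = τ.insertIdx (firstOr W τ.length) S := by
  have hv := notMem_of_mem_insertIdx hτ hvS (l := firstOr W τ.length)
  refine List.ext_getElem (by simp [insertVertex]) fun p h₁ h₂ => ?_
  simp only [insertVertex, List.getElem_map, List.getElem_mapIdx]
  split_ifs
  · exact Finset.erase_insert (hv _ (List.getElem_mem _))
  · exact Finset.erase_eq_of_notMem (hv _ (List.getElem_mem _))

theorem positionsOf_insertVertex (hτ : ∀ s ∈ τ, v ∉ s) (hvS : v ∉ S)
    (hW : W ⊆ Finset.range (τ.length + 1)) : positionsOf v (insertVertex v S W τ) = W := by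
  ext p
  simp only [mem_positionsOf, insertVertex, List.getElem_mapIdx]
  by_cases hpW : p ∈ W
  · simpa [hpW, List.length_insertIdx_of_le_length (firstOr_le hW)] using hW hpW
  · simp only [hpW, if_false, iff_false, not_exists]
    exact fun _ => notMem_of_mem_insertIdx hτ hvS _ (List.getElem_mem _)

theorem removedIndex_insertVertex (hτ : ∀ s ∈ τ, v ∉ s) (hvS : v ∉ S)
    (hW : W ⊆ Finset.range (τ.length + 1)) :
    removedIndex v (insertVertex v S W τ) = firstOr W τ.length := by
  rw [removedIndex, positionsOf_insertVertex hτ hvS hW, length_insertVertex hW, Nat.add_sub_cancel]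

theorem Rred_insertVertex (hτ : ∀ s ∈ τ, v ∉ s) (hvS : v ∉ S)
    (hW : W ⊆ Finset.range (τ.length + 1)) : Rred v (insertVertex v S W τ) = τ := by
  rw [Rred_eq_map_eraseIdx, removedIndex_insertVertex hτ hvS hW, ← List.eraseIdx_map,
    map_erase_insertVertex hτ hvS, List.eraseIdx_insertIdx_self]

theorem removedSet_insertVertex (hτ : ∀ s ∈ τ, v ∉ s) (hvS : v ∉ S)
    (hW : W ⊆ Finset.range (τ.length + 1)) : removedSet v (insertVertex v S W τ) = S := by
  have hl : firstOr W τ.length < (insertVertex v S W τ).length := by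
    rw [length_insertVertex hW]; exact Nat.lt_succ_of_le (firstOr_le hW)
  rw [removedSet, removedIndex_insertVertex hτ hvS hW, List.getD_eq_getElem _ _ hl]
  have h := List.getElem_of_eq (map_erase_insertVertex hτ hvS) (by simpa using hl)
  rwa [List.getElem_map, List.getElem_insertIdx_self] at h

theorem rho1_insertVertex (hτ : ∀ s ∈ τ, v ∉ s) (hvS : v ∉ S)
    (hW : W ⊆ Finset.range (τ.length + 1)) (j : Fin r) :
    rho1 (insertVertex v S W τ) j =
      rho1 τ j + (if j ∈ S then 1 else 0) + if j = v then W.card else 0 := by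
  by_cases hj : j = v
  · subst hj
    have hτj : rho1 τ j = 0 := List.countP_eq_zero.2 fun s hs => by simpa using hτ s hs
    rw [rho1_eq_card_positionsOf, positionsOf_insertVertex hτ hvS hW, hτj]
    simp [hvS]
  · have herase :
        rho1 (insertVertex v S W τ) j = rho1 ((insertVertex v S W τ).map (·.erase v)) j := by
      simp only [rho1, List.countP_map]
      congr 1
      funext s
      simp [Finset.mem_erase, hj]
    rw [herase, map_erase_insertVertex hτ hvS, rho1,
      (List.perm_insertIdx S τ (firstOr_le hW)).countP_eq, List.countP_cons, ← rho1]
    simp [hj]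

theorem subset_range_of_subset_Icc {W : Finset ℕ} {a L : ℕ} (hW : W ⊆ Finset.Icc a L) :
    W ⊆ Finset.range (L + 1) :=
  fun _ hp => Finset.mem_range.2 (Nat.lt_succ_of_le (Finset.mem_Icc.1 (hW hp)).2)

theorem sizeBounded_insertVertex (hτ : SizeBounded τ) (hW : W ⊆ Finset.Icc S.card τ.length)
    (hS : S.card ≤ τ.length + 1) : SizeBounded (insertVertex v S W τ) := by
  rw [sizeBounded_iff] at hτ ⊢
  have hWr := subset_range_of_subset_Icc hW
  set l := firstOr W τ.length with hldef
  have hl : l ≤ τ.length := firstOr_le hWr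
  intro p hp
  simp only [insertVertex, List.getElem_mapIdx]
  have hcard : ∀ x : Finset (Fin r), (if p ∈ W then insert v x else x).card ≤
      x.card + if p ∈ W then 1 else 0 := fun x => by
    split_ifs
    exacts [Finset.card_insert_le v x, le_rfl]
  refine (hcard _).trans ?_
  rcases lt_trichotomy p l with hpl | rfl | hpl
  · have hpW : p ∉ W := fun hpW => absurd (firstOr_le_of_mem (n := τ.length) hpW) (by omega)
    rw [List.getElem_insertIdx_of_lt hpl, if_neg hpW, add_zero]
    exact hτ p (by omega)
  · rw [List.getElem_insertIdx_self]
    split_ifs with hlW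
    · have := (Finset.mem_Icc.1 (hW hlW)).1; omega
    · have hW0 : W = ∅ := Finset.not_nonempty_iff_eq_empty.1 fun h => hlW (firstOr_mem h)
      rw [hldef, hW0, firstOr_empty]
      omega
  · rw [List.getElem_insertIdx_of_gt hpl]
    have := hτ (p - 1) (by rw [length_insertVertex hWr] at hp; omega)
    split_ifs <;> omega

theorem subset_upTo_of_mem_insertVertex (hv : (v : ℕ) = L + 1) (hτ : ∀ s ∈ τ, s ⊆ upTo L)
    (hS : S ⊆ upTo L) : ∀ s ∈ insertVertex v S W τ, s ⊆ upTo (L + 1) := by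
  have hbase : ∀ s ∈ τ.insertIdx (firstOr W τ.length) S, s ⊆ upTo (L + 1) := fun s hs x hx => by
    rcases List.mem_cons.1 (List.insertIdx_subset_cons _ _ _ hs) with rfl | hs
    exacts [by simpa using Nat.le_succ_of_le (mem_upTo.1 (hS hx)),
      by simpa using Nat.le_succ_of_le (mem_upTo.1 (hτ s hs hx))]
  intro s hs
  obtain ⟨p, hp, rfl⟩ := List.getElem_of_mem hs
  simp only [insertVertex, List.getElem_mapIdx]
  have := hbase _ (List.getElem_mem (List.length_mapIdx ▸ hp))
  split_ifs
  · exact Finset.insert_subset (mem_upTo.2 hv.le) this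
  · exact this

theorem removedSet_eq (hσ : σ ≠ []) :
    removedSet v σ = (σ[removedIndex v σ]'(removedIndex_lt hσ)).erase v := by
  rw [removedSet, List.getD_eq_getElem]

theorem insertVertex_removed (hσ : σ ≠ []) :
    insertVertex v (removedSet v σ) (positionsOf v σ) (Rred v σ) = σ := by
  have hl := removedIndex_lt (j := v) hσ
  have hfirst : firstOr (positionsOf v σ) (Rred v σ).length = removedIndex v σ := by
    rw [length_Rred]; rfl
  have hins : (Rred v σ).insertIdx (removedIndex v σ) (removedSet v σ) = σ.map (·.erase v) := by
    have hget : (σ[removedIndex v σ]).erase v =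
        (σ.map (·.erase v))[removedIndex v σ]'(by simpa using hl) := by simp
    rw [Rred_eq_map_eraseIdx, ← List.eraseIdx_map, removedSet_eq hσ, hget,
      List.insertIdx_eraseIdx_getElem]
  rw [insertVertex, hfirst, hins]
  refine List.ext_getElem (by simp) fun p h₁ h₂ => ?_
  simp only [List.getElem_mapIdx, List.getElem_map]
  split_ifs with hp
  · exact Finset.insert_erase (mem_positionsOf.1 hp).2
  · exact Finset.erase_eq_of_notMem fun hvp => hp (mem_positionsOf.2 ⟨h₂, hvp⟩)

theorem removedSet_subset_upTo (hv : (v : ℕ) = L + 1) (hσ : σ ≠ [])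
    (hsub : ∀ s ∈ σ, s ⊆ upTo (L + 1)) : removedSet v σ ⊆ upTo L := by
  intro x hx
  rw [removedSet_eq hσ] at hx
  have hxv := Finset.ne_of_mem_erase hx
  have := mem_upTo.1 (hsub _ (List.getElem_mem _) (Finset.mem_of_mem_erase hx))
  have : (x : ℕ) ≠ L + 1 := fun h => hxv (Fin.ext (h.trans hv.symm))
  exact mem_upTo.2 (by omega)

theorem positionsOf_subset_Icc (hσ : SizeBounded σ) :
    positionsOf v σ ⊆ Finset.Icc (removedSet v σ).card (σ.length - 1) := by
  intro p hp
  have hne : (positionsOf v σ).Nonempty := ⟨p, hp⟩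
  have hmem : removedIndex v σ ∈ positionsOf v σ := firstOr_mem hne
  obtain ⟨hl, hvl⟩ := mem_positionsOf.1 hmem
  have hlp : removedIndex v σ ≤ p := firstOr_le_of_mem hp
  have hcard := (sizeBounded_iff.1 hσ) _ hl
  rw [Finset.mem_Icc, removedSet, List.getD_eq_getElem _ _ hl, Finset.card_erase_of_mem hvl]
  have := (mem_positionsOf.1 hp).1
  omega

end Sequences

/-! ### The bijection -/

noncomputable def subsetEquivOfCardEq {α β : Type*} {s : Finset α} {t : Finset β}
    (h : s.card = t.card) :
    {A : Finset α // A ⊆ s} ≃ {B : Finset β // B ⊆ t} :=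
  (Equiv.finsetSubtypeComm (· ∈ s)).symm.trans
    ((Equiv.finsetCongr (s.equivOfCardEq h)).trans (Equiv.finsetSubtypeComm (· ∈ t)))

theorem card_subsetEquivOfCardEq {α β : Type*} {s : Finset α} {t : Finset β} (h : s.card = t.card)
    (A : {A : Finset α // A ⊆ s}) : (subsetEquivOfCardEq h A).1.card = A.1.card := by
  simp [subsetEquivOfCardEq, Equiv.finsetSubtypeComm]

def NbhdData (r L : ℕ) : Type :=
  Σ S : {S : Finset (Fin r) // S ⊆ upTo L}, {T : Finset (Fin r) // T ⊆ upTo L \ S.1}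

def PosData (r L : ℕ) : Type :=
  Σ S : {S : Finset (Fin r) // S ⊆ upTo L}, {W : Finset ℕ // W ⊆ Finset.Icc S.1.card L}

noncomputable def nbhdEquivPosData {L : ℕ} (hL : L < r) : NbhdData r L ≃ PosData r L :=
  Equiv.sigmaCongrRight fun S => subsetEquivOfCardEq <| by
    rw [Finset.card_sdiff_of_subset S.2, card_upTo hL, Nat.card_Icc]

theorem card_nbhdEquivPosData {L : ℕ} (hL : L < r) (x : NbhdData r L) :
    (nbhdEquivPosData hL x).2.1.card = x.2.1.card :=
  card_subsetEquivOfCardEq _ _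

def vertexSplitting {L : ℕ} (hL : L + 1 < r) :
    {M : Fin r → Fin r → Bool // OrientedUpTo (L + 1) M} ≃
      {M : Fin r → Fin r → Bool // OrientedUpTo L M} × NbhdData r L where
  toFun M := (⟨deleteVertex ⟨L + 1, hL⟩ M, orientedUpTo_deleteVertex M.2 rfl⟩,
    ⟨⟨outNeighbors _ M, outNeighbors_subset M.2 rfl⟩,
      ⟨inNeighbors _ M, inNeighbors_subset M.2 rfl⟩⟩)
  invFun x :=
    ⟨addVertex ⟨L + 1, hL⟩ x.2.1 x.2.2 x.1, orientedUpTo_addVertex x.1.2 rfl x.2.1.2 x.2.2.2⟩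
  left_inv M := Subtype.ext (addVertex_deleteVertex (M.2.1 _))
  right_inv := by
    rintro ⟨M, ⟨S, hS⟩, ⟨T, hT⟩⟩
    have hv : L < (⟨L + 1, hL⟩ : Fin r) := Nat.lt_succ_self L
    refine Prod.ext (Subtype.ext (deleteVertex_addVertex (M.2.eq_false_of_lt hv)))
      (Sigma.subtype_ext (Subtype.ext outNeighbors_addVertex) (inNeighbors_addVertex ?_ ?_))
    exacts [notMem_of_subset_upTo hv hS, notMem_of_subset_upTo hv (hT.trans Finset.sdiff_subset)]

theorem rho2_vertexSplitting_symm {L : ℕ} (hL : L + 1 < r)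
    (x : {M : Fin r → Fin r → Bool // OrientedUpTo L M} × NbhdData r L) (j : Fin r) :
    rho2 ((vertexSplitting hL).symm x).1 j = rho2 x.1.1 j + (if j ∈ x.2.1.1 then 1 else 0) +
      if j = ⟨L + 1, hL⟩ then x.2.2.1.card else 0 := by
  have hv : L < (⟨L + 1, hL⟩ : Fin r) := Nat.lt_succ_self L
  exact rho2_addVertex (x.1.2.eq_false_of_lt hv) (notMem_of_subset_upTo hv x.2.1.2)
    (notMem_of_subset_upTo hv (x.2.2.2.trans Finset.sdiff_subset)) j

theorem recBounded_insertVertex {L : ℕ} (hL : L + 1 < r) {τ : List (Finset (Fin r))}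
    (hτ : RecBounded L τ) {S : Finset (Fin r)} (hS : S ⊆ upTo L) {W : Finset ℕ}
    (hW : W ⊆ Finset.Icc S.card L) : RecBounded (L + 1) (insertVertex ⟨L + 1, hL⟩ S W τ) := by
  have hv : L < (⟨L + 1, hL⟩ : Fin r) := Nat.lt_succ_self L
  have hvS : (⟨L + 1, hL⟩ : Fin r) ∉ S := notMem_of_subset_upTo hv hS
  have hWr := hτ.1 ▸ subset_range_of_subset_Icc hW
  refine (recBounded_succ_iff hL).2 ⟨(length_insertVertex hWr).trans (congrArg (· + 1) hτ.1),
    subset_upTo_of_mem_insertVertex rfl hτ.2.1 hS, ?_, ?_⟩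
  · refine sizeBounded_insertVertex hτ.sizeBounded (hτ.1 ▸ hW) ?_
    rw [hτ.1, ← card_upTo (Nat.lt_of_succ_lt hL)]
    exact Finset.card_le_card hS
  · rwa [Rred_insertVertex (hτ.notMem hv) hvS hWr]

def seqSplitting {L : ℕ} (hL : L + 1 < r) :
    {σ : List (Finset (Fin r)) // RecBounded (L + 1) σ} ≃
      {τ : List (Finset (Fin r)) // RecBounded L τ} × PosData r L where
  toFun σ := (⟨Rred ⟨L + 1, hL⟩ σ, ((recBounded_succ_iff hL).1 σ.2).2.2.2⟩,
    ⟨⟨removedSet ⟨L + 1, hL⟩ σ, removedSet_subset_upTo rfl σ.2.ne_nil σ.2.2.1⟩,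
      ⟨positionsOf ⟨L + 1, hL⟩ σ, by
        have := positionsOf_subset_Icc (v := ⟨L + 1, hL⟩) σ.2.sizeBounded
        rwa [σ.2.1, Nat.add_sub_cancel] at this⟩⟩)
  invFun x :=
    ⟨insertVertex ⟨L + 1, hL⟩ x.2.1 x.2.2 x.1, recBounded_insertVertex hL x.1.2 x.2.1.2 x.2.2.2⟩
  left_inv σ := Subtype.ext (insertVertex_removed σ.2.ne_nil)
  right_inv := by
    rintro ⟨τ, ⟨S, hS⟩, ⟨W, hW⟩⟩
    have hv : L < (⟨L + 1, hL⟩ : Fin r) := Nat.lt_succ_self L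
    have hvS : (⟨L + 1, hL⟩ : Fin r) ∉ S := notMem_of_subset_upTo hv hS
    have hWr := τ.2.1 ▸ subset_range_of_subset_Icc hW
    exact Prod.ext (Subtype.ext (Rred_insertVertex (τ.2.notMem hv) hvS hWr))
      (Sigma.subtype_ext (Subtype.ext (removedSet_insertVertex (τ.2.notMem hv) hvS hWr))
        (positionsOf_insertVertex (τ.2.notMem hv) hvS hWr))

theorem rho1_seqSplitting_symm {L : ℕ} (hL : L + 1 < r)
    (x : {τ : List (Finset (Fin r)) // RecBounded L τ} × PosData r L) (j : Fin r) :
    rho1 ((seqSplitting hL).symm x).1 j = rho1 x.1.1 j + (if j ∈ x.2.1.1 then 1 else 0) +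
      if j = ⟨L + 1, hL⟩ then x.2.2.1.card else 0 := by
  have hv : L < (⟨L + 1, hL⟩ : Fin r) := Nat.lt_succ_self L
  have hWr : x.2.2.1 ⊆ Finset.range (x.1.1.length + 1) := by
    rw [x.1.2.1]; exact subset_range_of_subset_Icc x.2.2.2
  exact rho1_insertVertex (x.1.2.notMem hv) (notMem_of_subset_upTo hv x.2.1.2) hWr j

theorem orientedUpTo_zero_iff {M : Fin r → Fin r → Bool} :
    OrientedUpTo 0 M ↔ M = fun _ _ => false := by
  constructor
  · intro hM
    funext i j
    rw [Bool.eq_false_iff]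
    intro h
    obtain ⟨hi, hj⟩ := hM.2.2 i j h
    obtain rfl : i = j := Fin.ext (by omega)
    simp [hM.1 i] at h
  · rintro rfl
    exact ⟨fun _ => rfl, by simp, by simp⟩

theorem orientedUpTo_sub_one_iff {M : Fin r → Fin r → Bool} :
    OrientedUpTo (r - 1) M ↔ (∀ i, M i i = false) ∧ ∀ i j, M i j = true → M j i = false :=
  ⟨fun h => ⟨h.1, h.2.1⟩,
    fun h => ⟨h.1, h.2, fun i j _ => ⟨Nat.le_sub_one_of_lt i.2, Nat.le_sub_one_of_lt j.2⟩⟩⟩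

def equivZero :
    {M : Fin r → Fin r → Bool // OrientedUpTo 0 M} ≃
      {σ : List (Finset (Fin r)) // RecBounded 0 σ} where
  toFun _ := ⟨[], recBounded_zero_iff.2 rfl⟩
  invFun _ := ⟨_, orientedUpTo_zero_iff.2 rfl⟩
  left_inv M := Subtype.ext (orientedUpTo_zero_iff.1 M.2).symm
  right_inv σ := Subtype.ext (recBounded_zero_iff.1 σ.2).symm

theorem exists_equiv_rho2_eq_rho1 : ∀ L < r,
    ∃ e : {M : Fin r → Fin r → Bool // OrientedUpTo L M} ≃
        {σ : List (Finset (Fin r)) // RecBounded L σ},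
      ∀ M j, rho2 M.1 j = rho1 (e M).1 j
  | 0, _ => ⟨equivZero, fun M j => by
      rw [orientedUpTo_zero_iff.1 M.2]
      simp [rho2, rho1, equivZero]⟩
  | L + 1, hL => by
    obtain ⟨e, he⟩ := exists_equiv_rho2_eq_rho1 L (by omega)
    refine ⟨(vertexSplitting hL).trans
      ((e.prodCongr (nbhdEquivPosData (by omega))).trans (seqSplitting hL).symm), fun M j => ?_⟩
    obtain ⟨x, rfl⟩ := (vertexSplitting hL).symm.surjective M
    simp only [Equiv.trans_apply, Equiv.apply_symm_apply, Equiv.prodCongr_apply, Prod.map,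
      rho1_seqSplitting_symm, rho2_vertexSplitting_symm, he, card_nbhdEquivPosData]
    rfl

end DsgEncoding

/-- There is a bijection from adjacency matrices of directed graphs on `r` vertices
with no loops and no 2-cycles to `B(r-1, r)`, preserving in-degree sequences. -/
theorem dsg_encoding_bijection (r : ℕ) (hr : 1 ≤ r) :
    ∃ f : {M : Fin r → Fin r → Bool //
            (∀ i, M i i = false) ∧ ∀ i j, M i j = true → M j i = false} ≃
          {σ : List (Finset (Fin r)) // MemB r σ},
      ∀ M, ∀ j : Fin r, rho2 M.1 j = rho1 (f M).1 j := by
  obtain ⟨e, he⟩ := DsgEncoding.exists_equiv_rho2_eq_rho1 (r := r) (r - 1) (by omega)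
  let eA := Equiv.subtypeEquivRight fun M : Fin r → Fin r → Bool =>
    (DsgEncoding.orientedUpTo_sub_one_iff (M := M)).symm
  let eB := Equiv.subtypeEquivRight fun σ => (DsgEncoding.memB_iff_recBounded hr σ).symm
  exact ⟨eA.trans (e.trans eB), fun M => he (eA M)⟩
end
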